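/- arXiv:0801.1876 — 7 statements merged into one kernel-verified Lean document; each statement's English description precedes it below -/
import Mathlib

section
/- For a uniformly random permutation π of {1,...,n} with n ≥ 3, and any r with 3 ≤ r ≤ n, the probability that the first occurrence (in lexicographic order of 3-subsets) of an increasing pattern π(a)<π(b)<π(c) is at the triple {1,2,r} equals 1/(r-1) - 1/r. Equivalently, the number of permutations of {1,...,n} whose lexicographically first increasing triple is {1,2,r} is n!·(1/(r-1) - 1/r) = (r-2)!·(n!/r!). -/
/-!
The first increasing triple is at positions `0, 1, r - 1` exactly when, among the values of `π`
on `{0, …, r - 1}`, the largest is at `r - 1` and the second largest at `1`. For `i ≠ j` in this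
window, the permutations with largest value at `i` and second largest at `j` form `r (r - 1)`
classes partitioning all `n!` permutations, and right multiplication by a permutation of
positions that preserves the window maps one class bijectively onto another.
-/

open Finset

attribute [local instance] Classical.propDecidable

/-- The lexicographically first increasing (I-II-III) pattern of `π` occurs at
positions `a < b < c` (0-indexed elements of `Fin n`). -/
def FirstIncTripleAt (n : ℕ) (π : Equiv.Perm (Fin n)) (a b c : Fin n) : Prop :=
  a < b ∧ b < c ∧ π a < π b ∧ π b < π c ∧
  ∀ d e f : Fin n, d < e → e < f →
    (d < a ∨ (d = a ∧ (e < b ∨ (e = b ∧ f < c)))) →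
    ¬ (π d < π e ∧ π e < π f)

open Equiv MulAction Nat Pointwise

section TopTwo

variable {α β : Type*} [LinearOrder β]

def IsTopTwoOn (s : Finset α) (f : α → β) (a b : α) : Prop :=
  a ∈ s ∧ b ∈ s ∧ f b < f a ∧ ∀ x ∈ s, x ≠ a → x ≠ b → f x < f b

namespace IsTopTwoOn

variable {s : Finset α} {f : α → β} {a b a' b' : α}

theorem ne (h : IsTopTwoOn s f a b) : a ≠ b := by
  rintro rfl
  exact lt_irrefl _ h.2.2.1

theorem lt_left (h : IsTopTwoOn s f a b) {x : α} (hx : x ∈ s) (hxa : x ≠ a) : f x < f a := by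
  rcases eq_or_ne x b with rfl | hxb
  · exact h.2.2.1
  · exact (h.2.2.2 x hx hxa hxb).trans h.2.2.1

theorem unique (h : IsTopTwoOn s f a b) (h' : IsTopTwoOn s f a' b') : a = a' ∧ b = b' := by
  have ha : a = a' := by
    by_contra hne
    exact (h.lt_left h'.1 (Ne.symm hne)).asymm (h'.lt_left h.1 hne)
  subst ha
  refine ⟨rfl, ?_⟩
  by_contra hne
  exact (h.2.2.2 b' h'.2.1 h'.ne.symm (Ne.symm hne)).asymm (h'.2.2.2 b h.2.1 h.ne.symm hne)

theorem comp_iff {τ : Perm α} (hτ : ∀ x, τ x ∈ s ↔ x ∈ s) :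
    IsTopTwoOn s (f ∘ τ) a b ↔ IsTopTwoOn s f (τ a) (τ b) := by
  refine and_congr (hτ a).symm (and_congr (hτ b).symm (and_congr Iff.rfl ?_))
  conv_rhs => rw [← τ.forall_congr_right]
  simp only [hτ, τ.injective.ne_iff, Function.comp_apply]

end IsTopTwoOn

theorem exists_isTopTwoOn {s : Finset α} {f : α → β} (hf : Function.Injective f)
    (hs : 1 < #s) : ∃ a b, IsTopTwoOn s f a b := by
  obtain ⟨a, ha, hmax⟩ := s.exists_max_image f (card_pos.1 (by omega))
  obtain ⟨b, hb, hmax'⟩ := (s.erase a).exists_max_image f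
    (card_pos.1 (by rw [card_erase_of_mem ha]; omega))
  obtain ⟨hba, hb⟩ := mem_erase.1 hb
  refine ⟨a, b, ha, hb, (hmax b hb).lt_of_ne (hf.ne hba), fun x hx hxa hxb => ?_⟩
  exact (hmax' x (mem_erase.2 ⟨hxa, hx⟩)).lt_of_ne (hf.ne hxb)

end TopTwo

theorem exists_perm_preserving_apply_eq_of_ne {α : Type*} {s : Finset α} {a b i j : α}
    (ha : a ∈ s) (hb : b ∈ s) (hi : i ∈ s) (hj : j ∈ s) (hab : a ≠ b) (hij : i ≠ j) :
    ∃ τ : Perm α, (∀ x, τ x ∈ s ↔ x ∈ s) ∧ τ i = a ∧ τ j = b := by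
  have hσ := Perm.swap_mem_stabilizer (s := (s : Set α)) hi ha
  have hσj : swap i a j ∈ s := by
    rw [← mem_coe, ← mem_stabilizer_iff.1 hσ]
    exact Set.smul_mem_smul_set hj
  have hσja : swap i a j ≠ a := by
    rw [Ne, swap_apply_eq_iff, swap_apply_right]
    exact hij.symm
  set τ := swap (swap i a j) b * swap i a
  have hτ : τ ∈ stabilizer (Perm α) (s : Set α) :=
    mul_mem (Perm.swap_mem_stabilizer hσj hb) hσ
  refine ⟨τ, fun x => ?_, ?_, ?_⟩
  · have hx := Set.smul_mem_smul_set_iff (a := τ) (x := x) (s := (s : Set α))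
    rwa [mem_stabilizer_iff.1 hτ] at hx
  · rw [Perm.mul_apply, swap_apply_left, swap_apply_of_ne_of_ne hσja.symm hab]
  · rw [Perm.mul_apply, swap_apply_left]

theorem card_filter_isTopTwoOn_mul {α : Type*} [Fintype α] [DecidableEq α] [LinearOrder α]
    (s : Finset α) {a b : α} (ha : a ∈ s) (hb : b ∈ s) (hab : a ≠ b) :
    #{π : Perm α | IsTopTwoOn s π a b} * (#s * (#s - 1)) = (Fintype.card α)! := by
  set T : α × α → Finset (Perm α) := fun p => {π | IsTopTwoOn s π p.1 p.2}
  have hT : ∀ p ∈ s.offDiag, #(T p) = #(T (a, b)) := by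
    rintro ⟨i, j⟩ hp
    obtain ⟨hi, hj, hij⟩ := mem_offDiag.1 hp
    obtain ⟨τ, hτs, rfl, rfl⟩ := exists_perm_preserving_apply_eq_of_ne ha hb hi hj hab hij
    refine (card_equiv (Equiv.mulRight τ) fun π => ?_).symm
    simp only [T, mem_filter, mem_univ, true_and, coe_mulRight, Perm.coe_mul]
    exact (IsTopTwoOn.comp_iff hτs).symm
  have hcover : (univ : Finset (Perm α)) = s.offDiag.biUnion T := by
    refine (eq_univ_of_forall fun π => ?_).symm
    obtain ⟨i, j, h⟩ := exists_isTopTwoOn π.injective (one_lt_card.2 ⟨a, ha, b, hb, hab⟩)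
    exact mem_biUnion.2 ⟨(i, j), mem_offDiag.2 ⟨h.1, h.2.1, h.ne⟩, by simpa [T] using h⟩
  have hdisj : (s.offDiag : Set (α × α)).PairwiseDisjoint T := by
    refine fun p _ q _ hpq => disjoint_left.2 fun π hp hq => hpq ?_
    simp only [T, mem_filter] at hp hq
    exact Prod.ext_iff.2 (hp.2.unique hq.2)
  calc #(T (a, b)) * (#s * (#s - 1)) = ∑ p ∈ s.offDiag, #(T p) := by
        rw [sum_congr rfl hT, sum_const, offDiag_card, smul_eq_mul, Nat.mul_sub_one, mul_comm]
    _ = (Fintype.card α)! := by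
        rw [← card_biUnion hdisj, ← hcover, Finset.card_univ, Fintype.card_perm]

theorem firstIncTripleAt_iff_isTopTwoOn {n : ℕ} (π : Perm (Fin n)) {a b c : Fin n}
    (ha : (a : ℕ) = 0) (hb : (b : ℕ) = 1) (hbc : b < c) :
    FirstIncTripleAt n π a b c ↔ IsTopTwoOn (Iic c) π c b := by
  have hab : a < b := by rw [Fin.lt_def]; omega
  constructor
  · rintro ⟨-, -, hπab, hπbc, hfirst⟩
    refine ⟨mem_Iic.2 le_rfl, mem_Iic.2 hbc.le, hπbc, fun x hx hxc hxb => ?_⟩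
    rcases eq_or_ne x a with rfl | hxa
    · exact hπab
    have hbx : b < x := by
      rw [Ne, Fin.ext_iff] at hxa hxb
      rw [Fin.lt_def]
      omega
    have hnot := hfirst a b x hab hbx (Or.inr ⟨rfl, Or.inr ⟨rfl, (mem_Iic.1 hx).lt_of_ne hxc⟩⟩)
    exact (not_lt.1 fun h => hnot ⟨hπab, h⟩).lt_of_ne (π.injective.ne hxb)
  · rintro ⟨-, -, hπbc, htop⟩
    have hac := hab.trans hbc
    have hπab := htop a (mem_Iic.2 hac.le) hac.ne hab.ne
    refine ⟨hab, hbc, hπab, hπbc, ?_⟩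
    rintro d e f hde hef (hd | ⟨rfl, he | ⟨rfl, hf⟩⟩) ⟨-, hπef⟩
    · rw [Fin.lt_def] at hd; omega
    · rw [Fin.lt_def] at hde he; omega
    · exact (htop f (mem_Iic.2 hf.le) hf.ne hef.ne').asymm hπef

theorem eq_inv_sub_inv_and_eq_factorial_div {N n r : ℕ} (hr : 2 ≤ r)
    (h : N * (r * (r - 1)) = n !) :
    (N : ℚ) / n ! = 1 / ((r : ℚ) - 1) - 1 / r ∧ (N : ℚ) = (r - 2)! * ((n ! : ℚ) / r !) := by
  obtain ⟨m, rfl⟩ : ∃ m, r = m + 2 := ⟨r - 2, by omega⟩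
  have hN : (N : ℚ) ≠ 0 := by
    rintro hN
    exact factorial_ne_zero n (by rw [← h, Nat.cast_eq_zero.1 hN, zero_mul])
  rw [Nat.add_sub_cancel, factorial_succ, factorial_succ, ← h]
  push_cast [show m + 2 - 1 = m + 1 by omega]
  rw [show (m : ℚ) + 2 - 1 = m + 1 by ring]
  constructor <;> field_simp <;> ring

theorem stmt_0 (n r : ℕ) (hr3 : 3 ≤ r) (hrn : r ≤ n) :
    ((Finset.univ.filter (fun π : Equiv.Perm (Fin n) =>
        FirstIncTripleAt n π ⟨0, by omega⟩ ⟨1, by omega⟩ ⟨r - 1, by omega⟩)).card : ℚ)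
        / (Nat.factorial n : ℚ)
      = 1 / ((r : ℚ) - 1) - 1 / (r : ℚ) ∧
    ((Finset.univ.filter (fun π : Equiv.Perm (Fin n) =>
        FirstIncTripleAt n π ⟨0, by omega⟩ ⟨1, by omega⟩ ⟨r - 1, by omega⟩)).card : ℚ)
      = (Nat.factorial (r - 2) : ℚ) * ((Nat.factorial n : ℚ) / (Nat.factorial r : ℚ)) := by
  have hbc : (⟨1, by omega⟩ : Fin n) < ⟨r - 1, by omega⟩ := by rw [Fin.mk_lt_mk]; omega
  have hcount := card_filter_isTopTwoOn_mul (Iic _) (mem_Iic.2 le_rfl) (mem_Iic.2 hbc.le) hbc.ne'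
  rw [Fin.card_Iic, Fintype.card_fin, Fin.val_mk, Nat.sub_add_cancel (by omega : 1 ≤ r)] at hcount
  rw [← filter_congr fun π _ =>
    firstIncTripleAt_iff_isTopTwoOn π (a := ⟨0, by omega⟩) rfl rfl hbc] at hcount
  exact eq_inv_sub_inv_and_eq_factorial_div (by omega) hcount
end

section
/- For every bijection f: Z⁺ → Z⁺, there exists a lexicographically least 3-subset {1,s,r} with 1 < s < r such that f(1) < f(s) < f(r), and this least increasing triple has 1 as its smallest element. -/
/-!
A surjection `f : ℕ+ → ℕ+` takes a value above the finitely many values `f 1, …, f n`, at some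
point `x`, which forces `n < x` and `f n < f x`. Hence there is a least `s > 1` with
`f 1 < f s` and then a least `r > s` with `f s < f r`; every increasing triple `(1, b, c)` has
`s ≤ b`, and `r ≤ c` when `b = s`.
-/

theorem exists_gt_map_lt_of_surjective {α β : Type*} [LinearOrder α] [LocallyFiniteOrderBot α]
    [LinearOrder β] [NoMaxOrder β] {f : α → β} (hf : Function.Surjective f) (a : α) :
    ∃ x, a < x ∧ f a < f x := by
  have : Nonempty β := ⟨f a⟩
  obtain ⟨M, hM⟩ := ((Set.finite_Iic a).image f).bddAbove
  obtain ⟨b, hMb⟩ := exists_gt M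
  obtain ⟨x, rfl⟩ := hf b
  have hle : ∀ y ≤ a, f y < f x := fun y hy => (hM ⟨y, hy, rfl⟩).trans_lt hMb
  exact ⟨x, lt_of_not_ge fun hxa => (hle x hxa).false, hle a le_rfl⟩

/-- For every bijection `f : ℤ⁺ → ℤ⁺` there is a lexicographically least
increasing triple, and it has the form `{1, s, r}` with `1 < s < r` and
`f 1 < f s < f r`; i.e. its smallest element is `1` and it is lex-least among
all increasing triples whose smallest element is `1` (hence among all
increasing triples, since those starting at `1` precede the rest). -/
theorem stmt_4 (f : ℕ+ → ℕ+) (hf : Function.Bijective f) :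
    ∃ s r : ℕ+, 1 < s ∧ s < r ∧ f 1 < f s ∧ f s < f r ∧
      ∀ a b c : ℕ+, a < b → b < c → f a < f b → f b < f c →
        (1 < a ∨ (1 = a ∧ (s < b ∨ (s = b ∧ r ≤ c)))) := by
  obtain ⟨s, ⟨hs, hfs⟩, hs_min⟩ :=
    wellFounded_lt.has_min _ (exists_gt_map_lt_of_surjective hf.2 1)
  obtain ⟨r, ⟨hr, hfr⟩, hr_min⟩ :=
    wellFounded_lt.has_min _ (exists_gt_map_lt_of_surjective hf.2 s)
  refine ⟨s, r, hs, hr, hfs, hfr, fun a b c hab hbc hfab hfbc => ?_⟩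
  obtain h1a | rfl := (one_le (a := a)).lt_or_eq
  · exact Or.inl h1a
  refine Or.inr ⟨rfl, ?_⟩
  obtain hsb | rfl := (not_lt.mp (hs_min b ⟨hab, hfab⟩)).lt_or_eq
  · exact Or.inl hsb
  exact Or.inr ⟨rfl, not_lt.mp (hr_min c ⟨hbc, hfbc⟩)⟩
end

section
/- For a uniformly random permutation π of {1,...,n} with n ≥ 4 and 4 ≤ r ≤ n, the probability that the lexicographically first increasing triple of π is {1,3,r} equals (1/2)(1/(r-1) - 1/r) + (1/n)(1/(r-2) - 1/(r-1)). -/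
open Finset

attribute [local instance] Classical.propDecidable

/-!
Positions are 0-indexed, and `c = r - 1`. The first increasing triple is `(0, 2, c)` exactly when
`π 0 < π 2 < π c`, no position strictly between `2` and `c` completes `(0, 2)`, and `(0, 1)` starts
no increasing triple, i.e. either `π 1 < π 0` or `π 1` is the global maximum. In the first case the
event says that `c`, `2`, `0` carry the maxima over the windows `[0, c]`, `[0, c)`, `{0, 1}`; in the
second that `1`, `c`, `2` carry the maxima over `univ`, `[0, c] \ {1}`, `[0, c) \ {1}`. Each window
lies in the previous one and misses its argmax, so transpositions inside it preserve the previous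
events and permute the possible positions of its own maximum: the events are independent with
probabilities `1 / |window|`, giving `1 / (2 r (r - 1)) + 1 / (n (r - 1) (r - 2))`.
-/

open Equiv

section Argmax

variable {α : Type*} [LinearOrder α]

def IsArgmaxOn (π : Perm α) (T : Finset α) (a : α) : Prop :=
  ∀ b ∈ T, b ≠ a → π b < π a

def SwapInvariantOn (F : Finset (Perm α)) (T : Finset α) : Prop :=
  ∀ π ∈ F, ∀ b ∈ T, ∀ c ∈ T, π * swap b c ∈ F

lemma IsArgmaxOn.mul_swap {π : Perm α} {T : Finset α} {a b : α} (h : IsArgmaxOn π T a)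
    (ha : a ∈ T) (hb : b ∈ T) : IsArgmaxOn (π * swap a b) T b := by
  intro x hx hxb
  rw [Perm.mul_apply, Perm.mul_apply, swap_apply_right]
  by_cases hxa : x = a
  · subst hxa
    rw [swap_apply_left]
    exact h b hb (Ne.symm hxb)
  · rw [swap_apply_of_ne_of_ne hxa hxb]
    exact h x hx hxa

lemma IsArgmaxOn.eq {π : Perm α} {T : Finset α} {a b : α} (ha : IsArgmaxOn π T a)
    (hb : IsArgmaxOn π T b) (haT : a ∈ T) (hbT : b ∈ T) : a = b := by
  by_contra hab
  exact lt_asymm (ha b hbT (Ne.symm hab)) (hb a haT hab)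

lemma exists_isArgmaxOn (π : Perm α) {T : Finset α} (hT : T.Nonempty) :
    ∃ a ∈ T, IsArgmaxOn π T a := by
  obtain ⟨a, ha, hmax⟩ := T.exists_max_image π hT
  exact ⟨a, ha, fun b hb hba => (hmax b hb).lt_of_ne (π.injective.ne hba)⟩

lemma SwapInvariantOn.card_filter_isArgmaxOn_le {F : Finset (Perm α)} {T : Finset α}
    (hF : SwapInvariantOn F T) {a b : α} (ha : a ∈ T) (hb : b ∈ T) :
    #(F.filter (IsArgmaxOn · T a)) ≤ #(F.filter (IsArgmaxOn · T b)) := by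
  refine card_le_card_of_injOn (· * swap a b) (fun π hπ => ?_) ?_
  · rw [coe_filter] at hπ ⊢
    exact ⟨hF π hπ.1 a ha b hb, hπ.2.mul_swap ha hb⟩
  · intro π _ σ _ h
    exact mul_right_cancel h

lemma SwapInvariantOn.card_filter_isArgmaxOn_mul {F : Finset (Perm α)} {T : Finset α}
    (hF : SwapInvariantOn F T) {a : α} (ha : a ∈ T) :
    #(F.filter (IsArgmaxOn · T a)) * #T = #F := by
  have hF_eq : F = T.biUnion (fun b => F.filter (IsArgmaxOn · T b)) := by
    ext π
    simp only [mem_biUnion, mem_filter]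
    constructor
    · intro hπ
      obtain ⟨b, hb, hπb⟩ := exists_isArgmaxOn π ⟨a, ha⟩
      exact ⟨b, hb, hπ, hπb⟩
    · rintro ⟨_, _, hπ, _⟩
      exact hπ
  have hdisj : (T : Set α).PairwiseDisjoint (fun b => F.filter (IsArgmaxOn · T b)) := by
    intro b hb c hc hbc
    refine disjoint_left.mpr fun π hπb hπc => hbc ?_
    exact (mem_filter.mp hπb).2.eq (mem_filter.mp hπc).2 hb hc
  conv_rhs => rw [hF_eq, card_biUnion hdisj]
  rw [sum_congr rfl fun b hb => (hF.card_filter_isArgmaxOn_le hb ha).antisymm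
    (hF.card_filter_isArgmaxOn_le ha hb), sum_const, smul_eq_mul, mul_comm]

lemma SwapInvariantOn.filter_isArgmaxOn {F : Finset (Perm α)} {T T' : Finset α}
    (hF : SwapInvariantOn F T) {a : α} (hT' : T' ⊆ T) (ha : a ∉ T') :
    SwapInvariantOn (F.filter (IsArgmaxOn · T a)) T' := by
  intro π hπ b hb c hc
  rw [mem_filter] at hπ ⊢
  have hba : b ≠ a := ne_of_mem_of_not_mem hb ha
  have hca : c ≠ a := ne_of_mem_of_not_mem hc ha
  refine ⟨hF π hπ.1 b (hT' hb) c (hT' hc), fun x hx hxa => ?_⟩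
  have hsx : swap b c x ∈ T := by
    rcases eq_or_ne x b with rfl | hxb
    · rw [swap_apply_left]; exact hT' hc
    rcases eq_or_ne x c with rfl | hxc
    · rw [swap_apply_right]; exact hT' hb
    rwa [swap_apply_of_ne_of_ne hxb hxc]
  simp only [Perm.mul_apply, swap_apply_of_ne_of_ne hba.symm hca.symm]
  exact hπ.2 _ hsx fun h => hxa (by rw [← swap_apply_self b c x, h,
    swap_apply_of_ne_of_ne hba.symm hca.symm])

lemma card_filter_isArgmaxOn₃_mul [Fintype α] [DecidableEq α] {T₁ T₂ T₃ : Finset α}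
    {a₁ a₂ a₃ : α}
    (h₁ : a₁ ∈ T₁) (h₂ : a₂ ∈ T₂) (h₃ : a₃ ∈ T₃)
    (h₁₂ : T₂ ⊆ T₁) (h₂₃ : T₃ ⊆ T₂) (h₁ₙ : a₁ ∉ T₂) (h₂ₙ : a₂ ∉ T₃) :
    #(univ.filter fun π : Perm α => IsArgmaxOn π T₁ a₁ ∧ IsArgmaxOn π T₂ a₂ ∧
        IsArgmaxOn π T₃ a₃) * (#T₁ * #T₂ * #T₃) = (Fintype.card α).factorial := by
  have hF₁ : SwapInvariantOn univ T₁ := fun _ _ _ _ _ _ => mem_univ _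
  have hF₂ := hF₁.filter_isArgmaxOn h₁₂ h₁ₙ
  have hF₃ := hF₂.filter_isArgmaxOn h₂₃ h₂ₙ
  have hfilter : (univ.filter fun π : Perm α => IsArgmaxOn π T₁ a₁ ∧ IsArgmaxOn π T₂ a₂ ∧
      IsArgmaxOn π T₃ a₃) = ((univ.filter (IsArgmaxOn · T₁ a₁)).filter (IsArgmaxOn · T₂ a₂)).filter
        (IsArgmaxOn · T₃ a₃) := by
    simp only [filter_filter, and_assoc]
  rw [hfilter, ← Fintype.card_perm, ← card_univ, ← hF₁.card_filter_isArgmaxOn_mul h₁,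
    ← hF₂.card_filter_isArgmaxOn_mul h₂, ← hF₃.card_filter_isArgmaxOn_mul h₃]
  ring

end Argmax

def IsFirstCompletion {α : Type*} [LinearOrder α] (π : Perm α) (a b c : α) : Prop :=
  π a < π b ∧ π b < π c ∧ ∀ f, b < f → f < c → π f < π b

section Positions

variable {n : ℕ} {π : Perm (Fin n)} {i₀ i₁ i₂ c : Fin n}

lemma firstIncTripleAt_iff (h₀ : (i₀ : ℕ) = 0) (h₁ : (i₁ : ℕ) = 1) (h₂ : (i₂ : ℕ) = 2)
    (hc : 2 < (c : ℕ)) :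
    FirstIncTripleAt n π i₀ i₂ c ↔
      IsFirstCompletion π i₀ i₂ c ∧ (π i₁ < π i₀ ∨ IsArgmaxOn π univ i₁) := by
  have h₀₁ : i₀ < i₁ := Fin.lt_def.mpr (by omega)
  have h₁₂ : i₁ < i₂ := Fin.lt_def.mpr (by omega)
  have h₂c : i₂ < c := Fin.lt_def.mpr (by omega)
  constructor
  · rintro ⟨-, -, h02, h2c, hfirst⟩
    have no_completion (e f : Fin n) (hde : i₀ < e) (hef : e < f)
        (hlex : e < i₂ ∨ e = i₂ ∧ f < c) (h0e : π i₀ < π e) : π f < π e :=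
      (not_lt.mp fun hef' => hfirst i₀ e f hde hef (.inr ⟨rfl, hlex⟩) ⟨h0e, hef'⟩).lt_of_ne
        (π.injective.ne hef.ne')
    refine ⟨⟨h02, h2c, fun f h2f hfc =>
      no_completion i₂ f (h₀₁.trans h₁₂) h2f (.inr ⟨rfl, hfc⟩) h02⟩, ?_⟩
    refine (lt_or_gt_of_ne (π.injective.ne (Fin.ne_of_gt h₀₁))).imp id fun h01 f _ hf => ?_
    rcases eq_or_ne f i₀ with rfl | hf₀
    · exact h01
    · exact no_completion i₁ f h₀₁ (Fin.lt_def.mpr (by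
        have := Fin.val_ne_of_ne hf; have := Fin.val_ne_of_ne hf₀; omega)) (.inl h₁₂) h01
  · rintro ⟨⟨h02, h2c, hmid⟩, h1⟩
    refine ⟨h₀₁.trans h₁₂, h₂c, h02, h2c, fun d e f hde hef hlex ⟨hd, he⟩ => ?_⟩
    rcases hlex with hd₀ | ⟨rfl, he₂ | ⟨rfl, hfc⟩⟩
    · exact absurd (Fin.lt_def.mp hd₀) (by omega)
    · obtain rfl : e = i₁ := Fin.ext (by rw [Fin.lt_def] at hde he₂; omega)
      rcases h1 with h10 | hmax
      · exact lt_asymm hd h10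
      · exact lt_asymm he (hmax f (mem_univ f) hef.ne')
    · exact lt_asymm he (hmid f hef hfc)

lemma IsFirstCompletion.apply_lt_of_ne (h : IsFirstCompletion π i₀ i₂ c) (h₀ : (i₀ : ℕ) = 0)
    (h₁ : (i₁ : ℕ) = 1) (h₂ : (i₂ : ℕ) = 2) {b : Fin n} (hbc : b < c) (hb₁ : b ≠ i₁)
    (hb₂ : b ≠ i₂) : π b < π i₂ := by
  rcases eq_or_ne b i₀ with rfl | hb₀
  · exact h.1
  · refine h.2.2 b (Fin.lt_def.mpr ?_) hbc
    have := Fin.val_ne_of_ne hb₀; have := Fin.val_ne_of_ne hb₁; have := Fin.val_ne_of_ne hb₂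
    omega

lemma isFirstCompletion_and_apply_lt_iff (h₀ : (i₀ : ℕ) = 0) (h₁ : (i₁ : ℕ) = 1)
    (h₂ : (i₂ : ℕ) = 2) (hc : 2 < (c : ℕ)) :
    IsFirstCompletion π i₀ i₂ c ∧ π i₁ < π i₀ ↔
      IsArgmaxOn π (Iic c) c ∧ IsArgmaxOn π (Iio c) i₂ ∧ IsArgmaxOn π (Iic i₁) i₀ := by
  symm
  have h₀₁ : i₀ ≠ i₁ := Fin.ne_of_val_ne (by omega)
  have h₀₂ : i₀ ≠ i₂ := Fin.ne_of_val_ne (by omega)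
  have h₀c : i₀ < c := Fin.lt_def.mpr (by omega)
  have h₁c : i₁ < c := Fin.lt_def.mpr (by omega)
  have h₂c : i₂ < c := Fin.lt_def.mpr (by omega)
  constructor
  · rintro ⟨hmaxc, hmax₂, hmax₀⟩
    refine ⟨⟨hmax₂ i₀ (mem_Iio.mpr h₀c) h₀₂, hmaxc i₂ (mem_Iic.mpr h₂c.le) h₂c.ne,
      fun f h₂f hfc => hmax₂ f (mem_Iio.mpr hfc) h₂f.ne'⟩, hmax₀ i₁ (mem_Iic.mpr le_rfl) h₀₁.symm⟩
  · rintro ⟨hfirst, h₁₀⟩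
    have hmax₂ : IsArgmaxOn π (Iio c) i₂ := fun b hb hb₂ => by
      rcases eq_or_ne b i₁ with rfl | hb₁
      · exact h₁₀.trans hfirst.1
      · exact hfirst.apply_lt_of_ne h₀ h₁ h₂ (mem_Iio.mp hb) hb₁ hb₂
    refine ⟨fun b hb hbc => ?_, hmax₂, fun b hb hb₀ => ?_⟩
    · rcases eq_or_ne b i₂ with rfl | hb₂
      · exact hfirst.2.1
      · exact (hmax₂ b (mem_Iio.mpr ((mem_Iic.mp hb).lt_of_ne hbc)) hb₂).trans hfirst.2.1
    · obtain rfl : b = i₁ := Fin.ext (by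
        have := Fin.le_def.mp (mem_Iic.mp hb); have := Fin.val_ne_of_ne hb₀; omega)
      exact h₁₀

lemma isFirstCompletion_and_isArgmaxOn_iff (h₀ : (i₀ : ℕ) = 0) (h₁ : (i₁ : ℕ) = 1)
    (h₂ : (i₂ : ℕ) = 2) (hc : 2 < (c : ℕ)) :
    IsFirstCompletion π i₀ i₂ c ∧ IsArgmaxOn π univ i₁ ↔
      IsArgmaxOn π univ i₁ ∧ IsArgmaxOn π ((Iic c).erase i₁) c ∧
        IsArgmaxOn π ((Iio c).erase i₁) i₂ := by
  symm
  have h₀₁ : i₀ ≠ i₁ := Fin.ne_of_val_ne (by omega)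
  have h₀₂ : i₀ ≠ i₂ := Fin.ne_of_val_ne (by omega)
  have h₂₁ : i₂ ≠ i₁ := Fin.ne_of_val_ne (by omega)
  have h₀c : i₀ < c := Fin.lt_def.mpr (by omega)
  have h₂c : i₂ < c := Fin.lt_def.mpr (by omega)
  constructor
  · rintro ⟨hmax₁, hmaxc, hmax₂⟩
    refine ⟨⟨hmax₂ i₀ (mem_erase.mpr ⟨h₀₁, mem_Iio.mpr h₀c⟩) h₀₂,
      hmaxc i₂ (mem_erase.mpr ⟨h₂₁, mem_Iic.mpr h₂c.le⟩) h₂c.ne, fun f h₂f hfc => ?_⟩, hmax₁⟩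
    refine hmax₂ f (mem_erase.mpr ⟨Fin.ne_of_val_ne ?_, mem_Iio.mpr hfc⟩) h₂f.ne'
    have := Fin.lt_def.mp h₂f; omega
  · rintro ⟨hfirst, hmax₁⟩
    refine ⟨hmax₁, fun b hb hbc => ?_, fun b hb hb₂ => ?_⟩
    · obtain ⟨hb₁, hb⟩ := mem_erase.mp hb
      rcases eq_or_ne b i₂ with rfl | hb₂
      · exact hfirst.2.1
      · exact (hfirst.apply_lt_of_ne h₀ h₁ h₂ ((mem_Iic.mp hb).lt_of_ne hbc) hb₁ hb₂).trans
          hfirst.2.1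
    · obtain ⟨hb₁, hb⟩ := mem_erase.mp hb
      exact hfirst.apply_lt_of_ne h₀ h₁ h₂ (mem_Iio.mp hb) hb₁ hb₂

lemma card_filter_isArgmaxOn_Iic_Iio (h₀ : (i₀ : ℕ) = 0) (h₁ : (i₁ : ℕ) = 1) (h₂ : (i₂ : ℕ) = 2)
    (hc : 2 < (c : ℕ)) :
    #(univ.filter fun π : Perm (Fin n) =>
        IsArgmaxOn π (Iic c) c ∧ IsArgmaxOn π (Iio c) i₂ ∧ IsArgmaxOn π (Iic i₁) i₀) *
      (((c : ℕ) + 1) * c * 2) = n.factorial := by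
  have hi₂ : i₂ ∈ Iio c := mem_Iio.mpr (Fin.lt_def.mpr (by omega))
  have hi₀ : i₀ ∈ Iic i₁ := mem_Iic.mpr (Fin.le_def.mpr (by omega))
  have hsub : Iic i₁ ⊆ Iio c := fun b hb =>
    mem_Iio.mpr ((mem_Iic.mp hb).trans_lt (Fin.lt_def.mpr (by omega)))
  have hi₂' : i₂ ∉ Iic i₁ := fun h => absurd (Fin.le_def.mp (mem_Iic.mp h)) (by omega)
  have key := card_filter_isArgmaxOn₃_mul (mem_Iic.mpr le_rfl) hi₂ hi₀ Iio_subset_Iic_self hsub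
    notMem_Iio_self hi₂'
  rwa [Fin.card_Iic, Fin.card_Iio, Fin.card_Iic, h₁, Fintype.card_fin] at key

lemma card_filter_isArgmaxOn_univ_erase (h₁ : (i₁ : ℕ) = 1) (h₂ : (i₂ : ℕ) = 2)
    (hc : 2 < (c : ℕ)) :
    #(univ.filter fun π : Perm (Fin n) => IsArgmaxOn π univ i₁ ∧
        IsArgmaxOn π ((Iic c).erase i₁) c ∧ IsArgmaxOn π ((Iio c).erase i₁) i₂) *
      (n * c * (c - 1)) = n.factorial := by
  have h₁c : i₁ < c := Fin.lt_def.mpr (by omega)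
  have hcmem : c ∈ (Iic c).erase i₁ :=
    mem_erase.mpr ⟨Fin.ne_of_val_ne (by omega), mem_Iic.mpr le_rfl⟩
  have hi₂ : i₂ ∈ (Iio c).erase i₁ :=
    mem_erase.mpr ⟨Fin.ne_of_val_ne (by omega), mem_Iio.mpr (Fin.lt_def.mpr (by omega))⟩
  have hsub : (Iio c).erase i₁ ⊆ (Iic c).erase i₁ := erase_subset_erase _ Iio_subset_Iic_self
  have key := card_filter_isArgmaxOn₃_mul (mem_univ i₁) hcmem hi₂ (subset_univ _) hsub
    (notMem_erase _ _) (fun h => notMem_Iio_self (mem_of_mem_erase h))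
  rwa [card_univ, card_erase_of_mem (mem_Iic.mpr h₁c.le), card_erase_of_mem (mem_Iio.mpr h₁c),
    Fin.card_Iic, Fin.card_Iio, Fintype.card_fin, Nat.add_sub_cancel] at key

lemma firstIncTripleAt_iff_isArgmaxOn (h₀ : (i₀ : ℕ) = 0) (h₁ : (i₁ : ℕ) = 1)
    (h₂ : (i₂ : ℕ) = 2) (hc : 2 < (c : ℕ)) :
    FirstIncTripleAt n π i₀ i₂ c ↔
      (IsArgmaxOn π (Iic c) c ∧ IsArgmaxOn π (Iio c) i₂ ∧ IsArgmaxOn π (Iic i₁) i₀) ∨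
      (IsArgmaxOn π univ i₁ ∧ IsArgmaxOn π ((Iic c).erase i₁) c ∧
        IsArgmaxOn π ((Iio c).erase i₁) i₂) := by
  rw [firstIncTripleAt_iff h₀ h₁ h₂ hc, and_or_left,
    isFirstCompletion_and_apply_lt_iff h₀ h₁ h₂ hc,
    isFirstCompletion_and_isArgmaxOn_iff h₀ h₁ h₂ hc]

end Positions

/-- `P(X = {1,3,r}) = (1/2)(1/(r-1) - 1/r) + (1/n)(1/(r-2) - 1/(r-1))`. -/
theorem stmt_10 (n r : ℕ) (hr4 : 4 ≤ r) (hrn : r ≤ n) :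
    ((Finset.univ.filter (fun π : Equiv.Perm (Fin n) =>
        FirstIncTripleAt n π ⟨0, by omega⟩ ⟨2, by omega⟩ ⟨r - 1, by omega⟩)).card : ℚ)
        / (Nat.factorial n : ℚ)
      = (1 / 2) * (1 / ((r : ℚ) - 1) - 1 / (r : ℚ))
        + (1 / (n : ℚ)) * (1 / ((r : ℚ) - 2) - 1 / ((r : ℚ) - 1)) := by
  set i₀ : Fin n := ⟨0, by omega⟩
  set i₁ : Fin n := ⟨1, by omega⟩
  set i₂ : Fin n := ⟨2, by omega⟩
  set c : Fin n := ⟨r - 1, by omega⟩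
  have hc : 2 < (c : ℕ) := by simp only [c]; omega
  rw [filter_congr fun π _ => firstIncTripleAt_iff_isArgmaxOn (i₁ := i₁) rfl rfl rfl hc,
    filter_or, card_union_of_disjoint ?disj]
  case disj =>
    exact disjoint_filter.mpr fun π _ hA hB =>
      lt_asymm (hA.2.2 i₁ (mem_Iic.mpr le_rfl) (Fin.ne_of_val_ne one_ne_zero))
        (hB.1 i₀ (mem_univ _) (Fin.ne_of_val_ne zero_ne_one))
  have hA := card_filter_isArgmaxOn_Iic_Iio (i₀ := i₀) (i₁ := i₁) (i₂ := i₂) rfl rfl rfl hc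
  have hB := card_filter_isArgmaxOn_univ_erase (i₁ := i₁) (i₂ := i₂) rfl rfl hc
  obtain ⟨k, rfl⟩ : ∃ k, r = k + 4 := ⟨r - 4, by omega⟩
  rw [show (c : ℕ) = k + 3 from rfl] at hA hB
  rw [show k + 3 - 1 = k + 2 by omega] at hB
  have hA' := congrArg (Nat.cast (R := ℚ)) hA
  have hB' := congrArg (Nat.cast (R := ℚ)) hB
  have hn : (n : ℚ) ≠ 0 := Nat.cast_ne_zero.mpr (by omega)
  push_cast at hA' hB' ⊢
  rw [div_eq_iff (by positivity), show (k : ℚ) + 4 - 1 = k + 3 by ring,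
    show (k : ℚ) + 4 - 2 = k + 2 by ring]
  field_simp
  linear_combination (n * (k + 2) : ℚ) * hA' + (2 * (k + 4) : ℚ) * hB'
end

section
/- The probability that a uniformly random permutation π of {1,...,n} has no lexicographically-first increasing triple containing position 1 equals (1/n)·∑_{m=0}^{n-1} 1/m!, which is asymptotic to e/n as n → ∞. -/
open Finset Filter

attribute [local instance] Classical.propDecidable

namespace Stmt13Aux

/-- The "bad" predicate: there is an increasing triple whose first position is `0`. -/
abbrev Bad (n : ℕ) (π : Equiv.Perm (Fin n)) : Prop :=
  ∃ a b c : Fin n, (a : ℕ) = 0 ∧ a < b ∧ b < c ∧ π a < π b ∧ π b < π c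

variable {N : ℕ}

/-- If `π` is not bad, then values above `π 0` occur in decreasing order of position. -/
lemma key {π : Equiv.Perm (Fin (N + 1))} (hπ : ¬ Bad (N + 1) π)
    {v w : Fin (N + 1)} (hv : π 0 < v) (hvw : v < w) : π.symm w < π.symm v := by
  rcases lt_trichotomy (π.symm v) (π.symm w) with h | h | h
  · exfalso
    apply hπ
    refine ⟨0, π.symm v, π.symm w, rfl, ?_, h, ?_, ?_⟩
    · apply Fin.pos_of_ne_zero
      intro h0
      have : v = π 0 := by rw [← h0, Equiv.apply_symm_apply]
      exact absurd (this ▸ hv) (lt_irrefl _)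
    · simpa using hv
    · simpa using hvw
  · exact absurd (π.symm.injective h) (ne_of_lt hvw)
  · exact h

variable (j : Fin (N + 1))

/-- Positions occupied by `0` together with the positions given by `f`. -/
noncomputable def posSet (f : {v : Fin (N + 1) // v < j} ↪ {p : Fin (N + 1) // p ≠ 0}) :
    Finset (Fin (N + 1)) :=
  insert 0 (Finset.univ.image (fun v : {v : Fin (N + 1) // v < j} => (f v : Fin (N + 1))))

/-- The complement: positions for the "high" values. -/
noncomputable def sc (f : {v : Fin (N + 1) // v < j} ↪ {p : Fin (N + 1) // p ≠ 0}) :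
    Finset (Fin (N + 1)) :=
  Finset.univ \ posSet j f

lemma card_lt_subtype : Fintype.card {v : Fin (N + 1) // v < j} = (j : ℕ) := by
  have e : {v : Fin (N + 1) // v < j} ≃ Fin (j : ℕ) :=
    { toFun := fun v => ⟨(v.1 : ℕ), v.2⟩
      invFun := fun i => ⟨⟨(i : ℕ), i.2.trans j.isLt⟩, i.2⟩
      left_inv := fun v => rfl
      right_inv := fun i => rfl }
  rw [Fintype.card_congr e, Fintype.card_fin]

lemma card_ne_subtype : Fintype.card {p : Fin (N + 1) // p ≠ 0} = N := by
  have : Fintype.card {p : Fin (N + 1) // ¬ (p = 0)} = N := by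
    rw [Fintype.card_subtype_compl, Fintype.card_fin, Fintype.card_subtype_eq]
    omega
  exact this

lemma image_inj (f : {v : Fin (N + 1) // v < j} ↪ {p : Fin (N + 1) // p ≠ 0}) :
    Function.Injective (fun v : {v : Fin (N + 1) // v < j} => (f v : Fin (N + 1))) := by
  intro a b hab
  exact f.injective (Subtype.ext hab)

lemma sc_card (f : {v : Fin (N + 1) // v < j} ↪ {p : Fin (N + 1) // p ≠ 0}) :
    (sc j f).card = N - (j : ℕ) := by
  have h0 : (0 : Fin (N + 1)) ∉
      Finset.univ.image (fun v : {v : Fin (N + 1) // v < j} => (f v : Fin (N + 1))) := by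
    simp only [mem_image, mem_univ, true_and]
    rintro ⟨v, hv⟩
    exact (f v).2 hv
  rw [sc, card_sdiff_of_subset (subset_univ _), card_univ, Fintype.card_fin, posSet,
    card_insert_of_notMem h0, card_image_of_injective _ (image_inj j f), card_univ,
    card_lt_subtype]
  omega

lemma gt_bound {v : Fin (N + 1)} (h : j < v) : N - (v : ℕ) < N - (j : ℕ) := by
  have h1 : (j : ℕ) < (v : ℕ) := h
  have h2 : (v : ℕ) < N + 1 := v.isLt
  omega

/-- The inverse permutation of the permutation reconstructed from `f`. -/
noncomputable def gfun (f : {v : Fin (N + 1) // v < j} ↪ {p : Fin (N + 1) // p ≠ 0}) :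
    Fin (N + 1) → Fin (N + 1) := fun v =>
  if h : v < j then ((f ⟨v, h⟩ : {p : Fin (N + 1) // p ≠ 0}) : Fin (N + 1))
  else if h2 : v = j then 0
  else (sc j f).orderEmbOfFin (sc_card j f)
    ⟨N - (v : ℕ), gt_bound j (lt_of_le_of_ne (not_lt.mp h) (Ne.symm h2))⟩

lemma gfun_lt (f : {v : Fin (N + 1) // v < j} ↪ {p : Fin (N + 1) // p ≠ 0})
    {v : Fin (N + 1)} (h : v < j) : gfun j f v = (f ⟨v, h⟩ : Fin (N + 1)) := by
  rw [gfun, dif_pos h]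

lemma gfun_eq (f : {v : Fin (N + 1) // v < j} ↪ {p : Fin (N + 1) // p ≠ 0}) :
    gfun j f j = 0 := by
  rw [gfun, dif_neg (lt_irrefl j), dif_pos rfl]

lemma gfun_gt (f : {v : Fin (N + 1) // v < j} ↪ {p : Fin (N + 1) // p ≠ 0})
    {v : Fin (N + 1)} (h : j < v) :
    gfun j f v = (sc j f).orderEmbOfFin (sc_card j f) ⟨N - (v : ℕ), gt_bound j h⟩ := by
  rw [gfun, dif_neg (asymm h), dif_neg h.ne']

lemma gfun_gt_mem (f : {v : Fin (N + 1) // v < j} ↪ {p : Fin (N + 1) // p ≠ 0})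
    {v : Fin (N + 1)} (h : j < v) : gfun j f v ∈ sc j f := by
  rw [gfun_gt j f h]; exact Finset.orderEmbOfFin_mem _ _ _

lemma gfun_lt_mem (f : {v : Fin (N + 1) // v < j} ↪ {p : Fin (N + 1) // p ≠ 0})
    {v : Fin (N + 1)} (h : v < j) : gfun j f v ∈ posSet j f ∧ gfun j f v ≠ 0 := by
  rw [gfun_lt j f h]
  exact ⟨mem_insert_of_mem (mem_image.2 ⟨⟨v, h⟩, mem_univ _, rfl⟩), (f ⟨v, h⟩).2⟩

lemma g_inj (f : {v : Fin (N + 1) // v < j} ↪ {p : Fin (N + 1) // p ≠ 0}) :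
    Function.Injective (gfun j f) := by
  have hsc : ∀ x ∈ sc j f, x ∉ posSet j f ∧ x ≠ 0 := by
    intro x hx
    rw [sc] at hx; have hx := Finset.mem_sdiff.1 (by convert hx)
    exact ⟨hx.2, fun h0 => hx.2 (h0 ▸ mem_insert_self _ _)⟩
  intro v w hvw
  rcases lt_trichotomy v j with hv | hv | hv <;> rcases lt_trichotomy w j with hw | hw | hw
  · -- both < j
    rw [gfun_lt j f hv, gfun_lt j f hw] at hvw
    have h9 := f.injective (Subtype.ext hvw)
    exact congrArg Subtype.val h9
  · rw [hw] at hvw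
    exact absurd (hvw.trans (gfun_eq j f)) (gfun_lt_mem j f hv).2
  · have h9 : gfun j f v ∈ sc j f := by rw [hvw]; exact gfun_gt_mem j f hw
    exact absurd (gfun_lt_mem j f hv).1 (fun hmem => (hsc _ h9).1 hmem)
  · rw [hv] at hvw
    exact absurd (hvw.symm.trans (gfun_eq j f)) (gfun_lt_mem j f hw).2
  · rw [hv, hw]
  · rw [hv] at hvw
    exact absurd (hvw.symm.trans (gfun_eq j f)) (hsc _ (gfun_gt_mem j f hw)).2
  · have h9 : gfun j f w ∈ sc j f := by rw [← hvw]; exact gfun_gt_mem j f hv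
    exact absurd (gfun_lt_mem j f hw).1 (fun hmem => (hsc _ h9).1 hmem)
  · rw [hw] at hvw
    exact absurd (hvw.trans (gfun_eq j f)) (hsc _ (gfun_gt_mem j f hv)).2
  · -- both > j
    rw [gfun_gt j f hv, gfun_gt j f hw] at hvw
    have h1 := ((sc j f).orderEmbOfFin (sc_card j f)).injective hvw
    have h2 : N - (v : ℕ) = N - (w : ℕ) := congrArg Fin.val h1
    have h3 : (j : ℕ) < (v : ℕ) := hv
    have h4 : (j : ℕ) < (w : ℕ) := hw
    have h5 : (v : ℕ) < N + 1 := v.isLt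
    have h6 : (w : ℕ) < N + 1 := w.isLt
    exact Fin.ext (by omega)

/-- The permutation reconstructed from `j` and `f`. -/
noncomputable def bperm (f : {v : Fin (N + 1) // v < j} ↪ {p : Fin (N + 1) // p ≠ 0}) :
    Equiv.Perm (Fin (N + 1)) :=
  (Equiv.ofBijective (gfun j f) ((Finite.injective_iff_bijective).1 (g_inj j f))).symm

lemma bperm_symm_apply (f : {v : Fin (N + 1) // v < j} ↪ {p : Fin (N + 1) // p ≠ 0})
    (v : Fin (N + 1)) : (bperm j f).symm v = gfun j f v := rfl

lemma bperm_zero (f : {v : Fin (N + 1) // v < j} ↪ {p : Fin (N + 1) // p ≠ 0}) :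
    bperm j f 0 = j := by
  have h : (bperm j f).symm j = 0 := by rw [bperm_symm_apply, gfun_eq]
  have h2 := congrArg (bperm j f) h
  rw [Equiv.apply_symm_apply] at h2
  exact h2.symm

lemma bperm_not_bad (f : {v : Fin (N + 1) // v < j} ↪ {p : Fin (N + 1) // p ≠ 0}) :
    ¬ Bad (N + 1) (bperm j f) := by
  rintro ⟨a, b, c, ha, hab, hbc, h1, h2⟩
  have ha0 : a = 0 := Fin.ext ha
  subst ha0
  rw [bperm_zero] at h1
  set π := bperm j f with hπ
  have hb : b = gfun j f (π b) := by rw [← bperm_symm_apply, Equiv.symm_apply_apply]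
  have hc : c = gfun j f (π c) := by rw [← bperm_symm_apply, Equiv.symm_apply_apply]
  rw [gfun_gt j f h1] at hb
  rw [gfun_gt j f (h1.trans h2)] at hc
  rw [hb, hc] at hbc
  have h3 := ((sc j f).orderEmbOfFin (sc_card j f)).lt_iff_lt.mp hbc
  have h4 : N - ((π b : Fin (N+1)) : ℕ) < N - ((π c : Fin (N+1)) : ℕ) := h3
  have h5 : ((π b : Fin (N+1)) : ℕ) < ((π c : Fin (N+1)) : ℕ) := h2
  have h6 : ((π b : Fin (N+1)) : ℕ) < N + 1 := (π b).isLt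
  omega

/-- The forward map: positions of the low values. -/
noncomputable def fwd (π : Equiv.Perm (Fin (N + 1))) (h0 : π 0 = j) :
    {v : Fin (N + 1) // v < j} ↪ {p : Fin (N + 1) // p ≠ 0} :=
  ⟨fun v => ⟨π.symm v.1, by
      intro h
      have : v.1 = π 0 := by rw [← h, Equiv.apply_symm_apply]
      rw [h0] at this
      exact absurd (this ▸ v.2) (lt_irrefl _)⟩,
    by
      intro a b hab
      have := π.symm.injective (Subtype.ext_iff.mp hab)
      exact Subtype.ext this⟩

lemma fwd_bperm (f : {v : Fin (N + 1) // v < j} ↪ {p : Fin (N + 1) // p ≠ 0}) :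
    fwd j (bperm j f) (bperm_zero j f) = f := by
  ext v
  show (((bperm j f).symm v.1 : Fin (N+1)) : ℕ) = _
  rw [bperm_symm_apply, gfun_lt j f v.2]

lemma bperm_fwd (π : Equiv.Perm (Fin (N + 1))) (hbad : ¬ Bad (N + 1) π) (h0 : π 0 = j) :
    bperm j (fwd j π h0) = π := by
  set f := fwd j π h0 with hf
  have hg : ∀ v, gfun j f v = π.symm v := by
    intro v
    rcases lt_trichotomy v j with h | h | h
    · rw [gfun_lt j f h]; rfl
    · subst h
      rw [gfun_eq]
      symm
      rw [Equiv.symm_apply_eq, h0]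
    · rw [gfun_gt j f h]
      -- the decreasing enumeration coincides with `orderEmbOfFin`
      have hb : ∀ i : Fin (N - (j : ℕ)), N - (i : ℕ) < N + 1 := by
        intro i; omega
      set hfun : Fin (N - (j : ℕ)) → Fin (N + 1) :=
        fun i => π.symm ⟨N - (i : ℕ), hb i⟩ with hfun_def
      have hjlt : ∀ i : Fin (N - (j : ℕ)), (j : ℕ) < N - (i : ℕ) := by
        intro i; have := i.isLt; omega
      have hmem : ∀ i, hfun i ∈ sc j f := by
        intro i
        rw [sc]; refine Finset.mem_sdiff.2 ?_
        refine ⟨mem_univ _, ?_⟩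
        rw [posSet, mem_insert]
        rintro (h1 | h1)
        · have : (⟨N - (i : ℕ), hb i⟩ : Fin (N + 1)) = π 0 := by
            rw [← h1, hfun_def]; simp
          rw [h0] at this
          have := congrArg Fin.val this
          simp only at this
          have := hjlt i
          omega
        · rw [mem_image] at h1
          obtain ⟨u, _, hu⟩ := h1
          have : (u.1 : Fin (N+1)) = ⟨N - (i : ℕ), hb i⟩ := by
            have := π.symm.injective (show π.symm u.1 = π.symm ⟨N - (i : ℕ), hb i⟩ from hu)
            exact this
          have h2 : (u.1 : ℕ) = N - (i : ℕ) := congrArg Fin.val this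
          have h3 : (u.1 : ℕ) < (j : ℕ) := u.2
          have := hjlt i
          omega
      have hmono : StrictMono hfun := by
        intro i i' hii'
        have h1 : (i : ℕ) < (i' : ℕ) := hii'
        have h2 := i'.isLt
        apply key hbad
        · rw [h0]
          exact hjlt i'
        · show N - (i' : ℕ) < N - (i : ℕ)
          omega
      have huniq := Finset.orderEmbOfFin_unique (sc_card j f) hmem hmono
      have h7 : (j : ℕ) < (v : ℕ) := h
      have h8 : (v : ℕ) < N + 1 := v.isLt
      rw [← huniq]
      show π.symm ⟨N - (N - (v : ℕ)), _⟩ = π.symm v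
      congr 1
      apply Fin.ext
      show N - (N - (v : ℕ)) = (v : ℕ)
      omega
  have hσ : Equiv.ofBijective (gfun j f) ((Finite.injective_iff_bijective).1 (g_inj j f))
      = π.symm := Equiv.ext hg
  rw [bperm, hσ, Equiv.symm_symm]

lemma fiber_card :
    ((Finset.univ.filter (fun π : Equiv.Perm (Fin (N + 1)) => ¬ Bad (N + 1) π)).filter
      (fun π => π 0 = j)).card = N.descFactorial (j : ℕ) := by
  have hcard : (Finset.univ :
      Finset ({v : Fin (N + 1) // v < j} ↪ {p : Fin (N + 1) // p ≠ 0})).card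
      = N.descFactorial (j : ℕ) := by
    rw [card_univ, Fintype.card_embedding_eq, card_lt_subtype, card_ne_subtype]
  rw [← hcard]
  refine Finset.card_bij'
    (fun π hπ => fwd j π (by simp only [mem_filter] at hπ; exact hπ.2))
    (fun f _ => bperm j f) (fun π hπ => mem_univ _) ?_ ?_ ?_
  · intro f _
    simp only [mem_filter, mem_univ, true_and]
    exact ⟨bperm_not_bad j f, bperm_zero j f⟩
  · intro π hπ
    simp only [mem_filter, mem_univ, true_and] at hπ
    exact bperm_fwd j π hπ.1 hπ.2
  · intro f _
    exact fwd_bperm j f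

lemma count (n : ℕ) (hn : 1 ≤ n) :
    (Finset.univ.filter (fun π : Equiv.Perm (Fin n) => ¬ Bad n π)).card
      = ∑ m ∈ Finset.range n, (n - 1).descFactorial m := by
  obtain ⟨N, rfl⟩ : ∃ N, n = N + 1 := ⟨n - 1, by omega⟩
  rw [Finset.card_eq_sum_card_fiberwise (f := fun π : Equiv.Perm (Fin (N + 1)) => π 0)
    (t := Finset.univ) (fun x _ => mem_univ _)]
  have : ∀ j : Fin (N + 1),
      ((Finset.univ.filter (fun π : Equiv.Perm (Fin (N + 1)) => ¬ Bad (N + 1) π)).filter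
        (fun π => π 0 = j)).card = N.descFactorial (j : ℕ) := fun j => fiber_card j
  rw [Finset.sum_congr rfl (fun j _ => this j)]
  rw [Fin.sum_univ_eq_sum_range (fun m => N.descFactorial m) (N + 1)]
  simp

lemma prob (n : ℕ) (hn : 1 ≤ n) :
    ((Finset.univ.filter (fun π : Equiv.Perm (Fin n) => ¬ Bad n π)).card : ℝ)
        / (Nat.factorial n : ℝ)
      = (1 / (n : ℝ)) * ∑ m ∈ Finset.range n, 1 / (Nat.factorial m : ℝ) := by
  obtain ⟨N, rfl⟩ : ∃ N, n = N + 1 := ⟨n - 1, by omega⟩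
  rw [count (N + 1) (by omega)]
  have hrefl := Finset.sum_range_reflect (fun m => ((N + 1 - 1).descFactorial m : ℝ)) (N + 1)
  push_cast at hrefl ⊢
  rw [← hrefl]
  rw [Finset.sum_div, Finset.mul_sum]
  refine Finset.sum_congr rfl ?_
  intro m hm
  have hm' : m ≤ N := by
    have := Finset.mem_range.mp hm; omega
  have h1 : N + 1 - 1 - m = N - m := by omega
  have hnat : Nat.factorial m * N.descFactorial (N - m) = Nat.factorial N := by
    have := Nat.factorial_mul_descFactorial (show N - m ≤ N by omega)
    rwa [show N - (N - m) = m by omega] at this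
  have hcast : (N.descFactorial (N - m) : ℝ) = (Nat.factorial N : ℝ) / (Nat.factorial m : ℝ) := by
    rw [eq_div_iff (by exact_mod_cast Nat.factorial_ne_zero m), mul_comm]
    exact_mod_cast hnat
  rw [hcast, Nat.factorial_succ]
  have hN : (Nat.factorial N : ℝ) ≠ 0 := by exact_mod_cast Nat.factorial_ne_zero N
  have hm0 : (Nat.factorial m : ℝ) ≠ 0 := by exact_mod_cast Nat.factorial_ne_zero m
  have hn1 : ((N : ℝ) + 1) ≠ 0 := by positivity
  push_cast
  field_simp

end Stmt13Aux

/-- The probability that a uniformly random permutation of `{1,…,n}` has no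
increasing triple at any 3-subset containing position 1 (i.e. `X ≥ {2,3,4}`)
equals `(1/n)·∑_{m=0}^{n-1} 1/m!`, and `n` times this probability tends to `e`. -/
theorem stmt_13 :
    (∀ n : ℕ, 1 ≤ n →
      ((Finset.univ.filter (fun π : Equiv.Perm (Fin n) =>
          ¬ ∃ a b c : Fin n, (a : ℕ) = 0 ∧ a < b ∧ b < c ∧
            π a < π b ∧ π b < π c)).card : ℝ) / (Nat.factorial n : ℝ)
        = (1 / (n : ℝ)) * ∑ m ∈ Finset.range n, 1 / (Nat.factorial m : ℝ)) ∧
    Tendsto (fun n : ℕ =>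
      (n : ℝ) * (((Finset.univ.filter (fun π : Equiv.Perm (Fin n) =>
          ¬ ∃ a b c : Fin n, (a : ℕ) = 0 ∧ a < b ∧ b < c ∧
            π a < π b ∧ π b < π c)).card : ℝ) / (Nat.factorial n : ℝ)))
      atTop (nhds (Real.exp 1)) := by
  constructor
  · exact fun n hn => Stmt13Aux.prob n hn
  · have hsum : Tendsto (fun n : ℕ => ∑ m ∈ Finset.range n, 1 / (Nat.factorial m : ℝ))
        atTop (nhds (Real.exp 1)) := by
      have h1 : Real.exp 1 = NormedSpace.exp (1 : ℝ) := by rw [Real.exp_eq_exp_ℝ]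
      rw [h1]
      have h2 := (NormedSpace.expSeries_div_hasSum_exp (1 : ℝ)).tendsto_sum_nat
      simpa using h2
    refine hsum.congr' ?_
    filter_upwards [eventually_ge_atTop 1] with n hn
    rw [Stmt13Aux.prob n hn]
    have hn0 : (n : ℝ) ≠ 0 := Nat.cast_ne_zero.mpr (by omega)
    rw [← mul_assoc, mul_one_div, div_self hn0, one_mul]
end

section
/- For a uniformly random permutation π of {1,...,n}, there is no increasing triple π(1) < π(b) < π(c) with 1 < b < c ≤ n if and only if, setting j = π(1), the values n, n-1, ..., j+1 occur from left to right in π. Consequently the number of such permutations is ∑_{j=1}^{n} (n-1)!/(n-j)!. -/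
open Finset

attribute [local instance] Classical.propDecidable

section Aux

variable {m : ℕ}

/-- The "no increasing triple" order condition. -/
private def Cond (π : Equiv.Perm (Fin (m + 1))) : Prop :=
  ∀ v w : Fin (m + 1), π 0 < v → v < w → π.symm w < π.symm v

private lemma symm_ne_zero {j0 : Fin (m + 1)} {π : Equiv.Perm (Fin (m + 1))}
    (hπ : π 0 = j0) {x : Fin (m + 1)} (hx : x ≠ j0) : π.symm x ≠ 0 := by
  intro h
  apply hx
  rw [← hπ, ← h, Equiv.apply_symm_apply]

/-- Forward map: record the (shifted) positions of the values below `j0`. -/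
private def embOf (j0 : Fin (m + 1)) (π : Equiv.Perm (Fin (m + 1))) (hπ : π 0 = j0) :
    Fin (j0 : ℕ) ↪ Fin m where
  toFun i := ⟨(π.symm ⟨(i : ℕ), by have := i.isLt; have := j0.isLt; omega⟩ : ℕ) - 1, by
    have h1 := (π.symm (⟨(i : ℕ), by have := i.isLt; have := j0.isLt; omega⟩ : Fin (m+1))).isLt
    have h2 := i.isLt
    have h3 := j0.isLt
    omega⟩
  inj' := by
    intro a b hab
    simp only [Fin.mk.injEq] at hab
    have hna : π.symm ⟨(a : ℕ), by have := a.isLt; have := j0.isLt; omega⟩ ≠ 0 :=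
      symm_ne_zero hπ (by intro h; have := congrArg Fin.val h; simp at this; have := a.isLt; omega)
    have hnb : π.symm ⟨(b : ℕ), by have := b.isLt; have := j0.isLt; omega⟩ ≠ 0 :=
      symm_ne_zero hπ (by intro h; have := congrArg Fin.val h; simp at this; have := b.isLt; omega)
    have hna' : (π.symm ⟨(a : ℕ), by have := a.isLt; have := j0.isLt; omega⟩ : ℕ) ≠ 0 := by
      intro h; apply hna; ext; simp [h]
    have hnb' : (π.symm ⟨(b : ℕ), by have := b.isLt; have := j0.isLt; omega⟩ : ℕ) ≠ 0 := by
      intro h; apply hnb; ext; simp [h]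
    have heq : π.symm ⟨(a : ℕ), by have := a.isLt; have := j0.isLt; omega⟩
        = π.symm ⟨(b : ℕ), by have := b.isLt; have := j0.isLt; omega⟩ := by
      apply Fin.ext; omega
    have := π.symm.injective heq
    have := congrArg Fin.val this
    simp at this
    exact Fin.ext this

private lemma cardT (j0 : Fin (m + 1)) (f : Fin (j0 : ℕ) ↪ Fin m) :
    (Finset.univ \ Finset.image f Finset.univ).card = m - (j0 : ℕ) := by
  rw [Finset.card_sdiff_of_subset (Finset.subset_univ _), Finset.card_univ,
    Finset.card_image_of_injective _ f.injective, Finset.card_univ,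
    Fintype.card_fin, Fintype.card_fin]

/-- Inverse map: the position of each value under the reconstructed permutation. -/
private def posOf (j0 : Fin (m + 1)) (f : Fin (j0 : ℕ) ↪ Fin m) (v : Fin (m + 1)) :
    Fin (m + 1) :=
  if h : (v : ℕ) < (j0 : ℕ) then Fin.succ (f ⟨v, h⟩)
  else if h2 : (v : ℕ) = (j0 : ℕ) then 0
  else Fin.succ ((Finset.univ \ Finset.image f Finset.univ).orderEmbOfFin (cardT j0 f)
    ⟨m - (v : ℕ), by have := v.isLt; omega⟩)

private lemma posOf_small {j0 : Fin (m + 1)} {f : Fin (j0 : ℕ) ↪ Fin m} {v : Fin (m + 1)}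
    (h : (v : ℕ) < (j0 : ℕ)) : posOf j0 f v = Fin.succ (f ⟨v, h⟩) := dif_pos h

private lemma posOf_mid {j0 : Fin (m + 1)} {f : Fin (j0 : ℕ) ↪ Fin m} {v : Fin (m + 1)}
    (h : (v : ℕ) = (j0 : ℕ)) : posOf j0 f v = 0 := by
  rw [posOf, dif_neg (by omega), dif_pos h]

private lemma posOf_large {j0 : Fin (m + 1)} {f : Fin (j0 : ℕ) ↪ Fin m} {v : Fin (m + 1)}
    (h : (j0 : ℕ) < (v : ℕ)) :
    posOf j0 f v = Fin.succ ((Finset.univ \ Finset.image f Finset.univ).orderEmbOfFin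
      (cardT j0 f) ⟨m - (v : ℕ), by have := v.isLt; omega⟩) := by
  rw [posOf, dif_neg (by omega), dif_neg (by omega)]

private lemma posOf_inj (j0 : Fin (m + 1)) (f : Fin (j0 : ℕ) ↪ Fin m) :
    Function.Injective (posOf j0 f) := by
  intro a b hab
  have hmemf : ∀ i, (f i : Fin m) ∈ Finset.image f Finset.univ := by
    intro i; exact Finset.mem_image_of_mem _ (Finset.mem_univ i)
  have hmemT : ∀ k, ((Finset.univ \ Finset.image f Finset.univ).orderEmbOfFin (cardT j0 f) k)
      ∉ Finset.image f Finset.univ := by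
    intro k
    have := Finset.orderEmbOfFin_mem (Finset.univ \ Finset.image f Finset.univ) (cardT j0 f) k
    exact (Finset.mem_sdiff.mp this).2
  rcases lt_trichotomy ((a : ℕ)) ((j0 : ℕ)) with ha | ha | ha <;>
    rcases lt_trichotomy ((b : ℕ)) ((j0 : ℕ)) with hb | hb | hb
  · rw [posOf_small ha, posOf_small hb] at hab
    have := f.injective (Fin.succ_injective _ hab)
    have := congrArg Fin.val this
    simp at this
    exact Fin.ext this
  · rw [posOf_small ha, posOf_mid hb] at hab
    exact absurd hab (Fin.succ_ne_zero _)
  · rw [posOf_small ha, posOf_large hb] at hab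
    have := Fin.succ_injective _ hab
    exact absurd (this ▸ hmemf ⟨a, ha⟩) (hmemT _)
  · rw [posOf_mid ha, posOf_small hb] at hab
    exact absurd hab.symm (Fin.succ_ne_zero _)
  · exact Fin.ext (by omega)
  · rw [posOf_mid ha, posOf_large hb] at hab
    exact absurd hab.symm (Fin.succ_ne_zero _)
  · rw [posOf_large ha, posOf_small hb] at hab
    have := Fin.succ_injective _ hab
    exact absurd (this.symm ▸ hmemf ⟨b, hb⟩) (hmemT _)
  · rw [posOf_large ha, posOf_mid hb] at hab
    exact absurd hab (Fin.succ_ne_zero _)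
  · rw [posOf_large ha, posOf_large hb] at hab
    have h1 := ((Finset.univ \ Finset.image f Finset.univ).orderEmbOfFin
      (cardT j0 f)).injective (Fin.succ_injective _ hab)
    have h2 := congrArg Fin.val h1
    simp only [Fin.val_mk] at h2
    have ha' := a.isLt
    have hb' := b.isLt
    exact Fin.ext (by omega)

private noncomputable def permOf (j0 : Fin (m + 1)) (f : Fin (j0 : ℕ) ↪ Fin m) : Equiv.Perm (Fin (m + 1)) :=
  (Equiv.ofBijective (posOf j0 f) (Finite.injective_iff_bijective.mp (posOf_inj j0 f))).symm

private lemma permOf_symm (j0 : Fin (m + 1)) (f : Fin (j0 : ℕ) ↪ Fin m) (v : Fin (m + 1)) :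
    (permOf j0 f).symm v = posOf j0 f v := rfl

private lemma permOf_zero (j0 : Fin (m + 1)) (f : Fin (j0 : ℕ) ↪ Fin m) :
    permOf j0 f 0 = j0 := by
  have h : (permOf j0 f).symm j0 = 0 := by rw [permOf_symm]; exact posOf_mid rfl
  rw [← h, Equiv.apply_symm_apply]

private lemma permOf_cond (j0 : Fin (m + 1)) (f : Fin (j0 : ℕ) ↪ Fin m) :
    Cond (permOf j0 f) := by
  intro v w hv hvw
  rw [permOf_zero] at hv
  have hv' : (j0 : ℕ) < (v : ℕ) := hv
  have hw' : (j0 : ℕ) < (w : ℕ) := lt_trans hv hvw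
  rw [permOf_symm, permOf_symm, posOf_large hv', posOf_large hw']
  rw [Fin.succ_lt_succ_iff]
  apply ((Finset.univ \ Finset.image f Finset.univ).orderEmbOfFin (cardT j0 f)).strictMono
  have hvm := v.isLt
  have hwm := w.isLt
  have hvw' : (v : ℕ) < (w : ℕ) := hvw
  exact Fin.mk_lt_mk.mpr (by omega)

private lemma fiber_aux (m : ℕ) (j0 : Fin (m + 1)) :
    (Finset.univ.filter (fun π : Equiv.Perm (Fin (m + 1)) =>
        Cond π ∧ π 0 = j0)).card = Nat.descFactorial m j0 := by
  rw [show Nat.descFactorial m (j0 : ℕ)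
      = (Finset.univ : Finset (Fin (j0 : ℕ) ↪ Fin m)).card by
    rw [Finset.card_univ, Fintype.card_embedding_eq, Fintype.card_fin, Fintype.card_fin]]
  refine Finset.card_bij'
    (fun π hπ => embOf j0 π (by simpa using (Finset.mem_filter.mp hπ).2.2))
    (fun f _ => permOf j0 f) (fun _ _ => Finset.mem_univ _) ?_ ?_ ?_
  · intro f _
    simp only [Finset.mem_filter, Finset.mem_univ, true_and]
    exact ⟨permOf_cond j0 f, permOf_zero j0 f⟩
  · -- left inverse : permOf (embOf π) = π
    intro π hπ
    simp only [Finset.mem_filter, Finset.mem_univ, true_and] at hπ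
    obtain ⟨hcond, hz⟩ := hπ
    set f := embOf j0 π hz with hf
    have hsymm : ∀ v, posOf j0 f v = π.symm v := by
      intro v
      rcases lt_trichotomy ((v : ℕ)) ((j0 : ℕ)) with h | h | h
      · rw [posOf_small h]
        have hne : π.symm v ≠ 0 :=
          symm_ne_zero hz (by intro hc; rw [hc] at h; exact lt_irrefl _ h)
        have hne' : (π.symm v : ℕ) ≠ 0 := by intro h; apply hne; ext; simp [h]
        apply Fin.ext
        have hval : (f ⟨(v : ℕ), h⟩ : ℕ)
            = (π.symm ⟨(v : ℕ), by have := v.isLt; omega⟩ : ℕ) - 1 := rfl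
        have hvv : (⟨(v : ℕ), by have := v.isLt; omega⟩ : Fin (m + 1)) = v := Fin.ext rfl
        rw [Fin.val_succ, hval, hvv]
        omega
      · rw [posOf_mid h]
        have : v = j0 := Fin.ext h
        rw [this, ← hz, Equiv.symm_apply_apply]
      · rw [posOf_large h]
        -- identify the order embedding with the positions of large values
        set T := Finset.univ \ Finset.image f Finset.univ with hT
        have hmb : ∀ k : Fin (m - (j0 : ℕ)), (j0 : ℕ) < m - (k : ℕ) ∧ m - (k : ℕ) < m + 1 := by
          intro k; have := k.isLt; omega
        set F : Fin (m - (j0 : ℕ)) → Fin m := fun k =>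
          ⟨(π.symm ⟨m - (k : ℕ), (hmb k).2⟩ : ℕ) - 1, by
            have h1 := (π.symm (⟨m - (k : ℕ), (hmb k).2⟩ : Fin (m + 1))).isLt
            have h2 := k.isLt
            omega⟩ with hF
        have hFne : ∀ k : Fin (m - (j0 : ℕ)),
            (π.symm ⟨m - (k : ℕ), (hmb k).2⟩ : ℕ) ≠ 0 := by
          intro k
          have := symm_ne_zero hz (x := ⟨m - (k : ℕ), (hmb k).2⟩)
            (by intro hc; have := congrArg Fin.val hc; simp at this; have := (hmb k).1; omega)
          intro h; apply this; ext; simp [h]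
        have hFT : ∀ k, F k ∈ T := by
          intro k
          rw [hT, Finset.mem_sdiff]
          refine ⟨Finset.mem_univ _, ?_⟩
          intro hmem
          obtain ⟨i, _, hi⟩ := Finset.mem_image.mp hmem
          have hival : (f i : ℕ)
              = (π.symm ⟨(i : ℕ), by have := i.isLt; have := j0.isLt; omega⟩ : ℕ) - 1 := rfl
          have hine : (π.symm ⟨(i : ℕ), by have := i.isLt; have := j0.isLt; omega⟩ : ℕ) ≠ 0 := by
            have := symm_ne_zero hz
              (x := ⟨(i : ℕ), by have := i.isLt; have := j0.isLt; omega⟩)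
              (by intro hc; have := congrArg Fin.val hc; simp at this; have := i.isLt; omega)
            intro h; apply this; ext; simp [h]
          have hvaleq := congrArg Fin.val hi
          rw [hival] at hvaleq
          have hFval : (F k : ℕ) = (π.symm ⟨m - (k : ℕ), (hmb k).2⟩ : ℕ) - 1 := rfl
          rw [hFval] at hvaleq
          have heq : π.symm ⟨(i : ℕ), by have := i.isLt; have := j0.isLt; omega⟩
              = π.symm ⟨m - (k : ℕ), (hmb k).2⟩ := Fin.ext (by have := hFne k; omega)
          have := congrArg Fin.val (π.symm.injective heq)
          simp at this
          have := i.isLt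
          have := (hmb k).1
          omega
        have hFmono : StrictMono F := by
          intro k k' hkk'
          have hk := k.isLt
          have hk' := k'.isLt
          have hlt : (⟨m - (k' : ℕ), (hmb k').2⟩ : Fin (m + 1))
              < ⟨m - (k : ℕ), (hmb k).2⟩ := Fin.mk_lt_mk.mpr (by
            have hkk : (k : ℕ) < (k' : ℕ) := hkk'
            omega)
          have hcnd := hcond ⟨m - (k' : ℕ), (hmb k').2⟩ ⟨m - (k : ℕ), (hmb k).2⟩
            (by rw [hz]; exact Fin.mk_lt_mk.mpr (by have := (hmb k').1; simp; omega)) hlt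
          have hv1 := hFne k
          have hv2 := hFne k'
          have hcval : (π.symm ⟨m - (k : ℕ), (hmb k).2⟩ : ℕ)
              < (π.symm ⟨m - (k' : ℕ), (hmb k').2⟩ : ℕ) := hcnd
          exact Fin.mk_lt_mk.mpr (by omega)
        have hFeq : F = ⇑(T.orderEmbOfFin (cardT j0 f)) :=
          Finset.orderEmbOfFin_unique (cardT j0 f) hFT hFmono
        have hvm := v.isLt
        have hkv : m - (m - (v : ℕ)) = (v : ℕ) := by omega
        have happ := congrFun hFeq ⟨m - (v : ℕ), by omega⟩
        rw [hF] at happ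
        have hargv : (⟨m - (m - (v : ℕ)), (hmb ⟨m - (v : ℕ), by omega⟩).2⟩ : Fin (m + 1))
            = v := Fin.ext (by simp [hkv])
        have hne : π.symm v ≠ 0 :=
          symm_ne_zero hz (by intro hc; rw [hc] at h; exact lt_irrefl _ h)
        have hne' : (π.symm v : ℕ) ≠ 0 := by intro h; apply hne; ext; simp [h]
        apply Fin.ext
        rw [Fin.val_succ, ← happ]
        simp only [Fin.val_mk]
        rw [show (⟨m - (⟨m - (v : ℕ), by omega⟩ : Fin (m - (j0:ℕ))).val,
          (hmb ⟨m - (v : ℕ), by omega⟩).2⟩ : Fin (m+1)) = v from Fin.ext (by simp [hkv])]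
        omega
    have hsymm' : (permOf j0 f).symm = π.symm := by
      ext v
      rw [permOf_symm]
      exact congrArg Fin.val (hsymm v)
    have : permOf j0 f = π := by
      have := congrArg Equiv.symm hsymm'
      simpa using this
    exact this
  · -- right inverse : embOf (permOf f) = f
    intro f _
    apply DFunLike.ext
    intro i
    apply Fin.ext
    have hEval : (embOf j0 (permOf j0 f) (permOf_zero j0 f) i : ℕ)
        = ((permOf j0 f).symm ⟨(i : ℕ), by have := i.isLt; have := j0.isLt; omega⟩ : ℕ) - 1 :=
      rfl
    rw [hEval, permOf_symm, posOf_small (by simpa using i.isLt)]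
    have : (⟨((⟨(i : ℕ), by have := i.isLt; have := j0.isLt; omega⟩ : Fin (m+1)) : ℕ),
        by simpa using i.isLt⟩ : Fin (j0 : ℕ)) = i := Fin.ext rfl
    rw [Fin.val_succ, this]
    omega


private lemma count_aux (m : ℕ) :
    (Finset.univ.filter (fun π : Equiv.Perm (Fin (m + 1)) => Cond π)).card
      = ∑ j0 : Fin (m + 1), Nat.descFactorial m (j0 : ℕ) := by
  rw [Finset.card_eq_sum_card_fiberwise (f := fun π => π 0) (t := Finset.univ)
    (fun x _ => Finset.mem_univ _)]
  refine Finset.sum_congr rfl fun j0 _ => ?_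
  rw [Finset.filter_filter]
  exact fiber_aux m j0

end Aux

/-- A permutation `π` of `{1,…,n}` has no increasing triple `π(1)<π(b)<π(c)`
(`1 < b < c`) iff the values `n, n-1, …, π(1)+1` occur from left to right in `π`
(the position of each larger value precedes that of each smaller one among the
values exceeding `π(1)`). Consequently the number of such permutations is
`∑_{j=1}^n (n-1)!/(n-j)!`. -/
theorem stmt_14 (n : ℕ) (hn : 1 ≤ n) :
    (∀ π : Equiv.Perm (Fin n),
      (¬ ∃ a b c : Fin n, (a : ℕ) = 0 ∧ a < b ∧ b < c ∧ π a < π b ∧ π b < π c) ↔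
        (∀ v w : Fin n, π ⟨0, by omega⟩ < v → v < w → π.symm w < π.symm v)) ∧
    (Finset.univ.filter (fun π : Equiv.Perm (Fin n) =>
        ¬ ∃ a b c : Fin n, (a : ℕ) = 0 ∧ a < b ∧ b < c ∧ π a < π b ∧ π b < π c)).card
      = ∑ j ∈ Finset.Icc 1 n, Nat.factorial (n - 1) / Nat.factorial (n - j) := by
  obtain ⟨m, rfl⟩ : ∃ m, n = m + 1 := ⟨n - 1, by omega⟩
  have hiff : ∀ π : Equiv.Perm (Fin (m + 1)),
      (¬ ∃ a b c : Fin (m + 1), (a : ℕ) = 0 ∧ a < b ∧ b < c ∧ π a < π b ∧ π b < π c) ↔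
        Cond π := by
    intro π
    constructor
    · intro h v w hv hvw
      by_contra hcon
      push_neg at hcon
      have hne : π.symm v ≠ π.symm w := by
        intro he
        exact absurd (π.symm.injective he) (ne_of_lt hvw)
      have hlt : π.symm v < π.symm w := lt_of_le_of_ne hcon hne
      have hb0 : (0 : Fin (m + 1)) < π.symm v := by
        refine Fin.pos_iff_ne_zero.mpr fun he => ?_
        have hv0 : v = π 0 := by rw [← he]; simp
        rw [hv0] at hv
        exact lt_irrefl _ hv
      exact h ⟨0, π.symm v, π.symm w, rfl, hb0, hlt, by simpa using hv, by simpa using hvw⟩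
    · rintro h ⟨a, b, c, ha, hab, hbc, h1, h2⟩
      have ha' : a = 0 := Fin.ext ha
      subst ha'
      have := h (π b) (π c) h1 h2
      simp only [Equiv.symm_apply_apply] at this
      exact absurd hbc (lt_asymm this)
  constructor
  · intro π
    exact hiff π
  · rw [Finset.filter_congr (fun π _ => hiff π), count_aux]
    rw [Fin.sum_univ_eq_sum_range (fun i => Nat.descFactorial m i)]
    rw [show Finset.Icc 1 (m + 1) = Finset.Ico 1 (m + 2) from (Finset.Ico_add_one_right_eq_Icc 1 (m+1)).symm,
      Finset.sum_Ico_eq_sum_range]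
    refine Finset.sum_congr (by norm_num) fun i hi => ?_
    rw [Finset.mem_range] at hi
    rw [Nat.descFactorial_eq_div (by omega : i ≤ m), show m + 1 - 1 = m from rfl,
      show m + 1 - (1 + i) = m - i by omega]
end

section
/- The number of 123-avoiding permutations of {1,...,n} is the Catalan number C(2n,n)/(n+1); hence the probability that a uniformly random permutation of {1,...,n} has no increasing subsequence of length 3 is C(2n,n)/(n+1)!. -/
/-!
The 123-avoiding and the 132-avoiding permutations are equinumerous (Simion–Schmidt), and the
132-avoiders satisfy the Catalan recursion. Both kinds of avoiders have the pattern `a x y` with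
`a < x, y` and `x, y` in a fixed order, so an avoider is determined by its left-to-right minima
(values and positions): every other entry must be the extremal unused value above the current
minimum. Refilling the non-minima of one kind of avoider with the opposite extremal choice gives
an injection into the other kind, in both directions. In a 132-avoider of `{0, …, n}` every entry
left of `n` exceeds every entry right of it, which splits it into two smaller 132-avoiders.
-/

open Finset

attribute [local instance] Classical.propDecidable

namespace PatternAvoidance

open scoped List

theorem perm_range_of_nodup {n : ℕ} {l : List ℕ} (hnd : l.Nodup) (hlen : l.length = n)
    (hlt : ∀ x ∈ l, x < n) : l ~ List.range n := by
  refine List.perm_of_nodup_nodup_toFinset_eq hnd List.nodup_range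
    (eq_of_subset_of_card_le (fun x hx => ?_) ?_)
  · simpa using hlt x (List.mem_toFinset.1 hx)
  · rw [List.toFinset_card_of_nodup hnd, List.toFinset_card_of_nodup List.nodup_range]
    simp [hlen]

theorem range_succ_perm (n : ℕ) : List.range (n + 1) ~ n :: List.range n := by
  rw [List.range_succ]
  exact List.perm_append_singleton n _

theorem append_cons_inj_of_notMem {α : Type*} [DecidableEq α] {a : α} {p s p' s' : List α}
    (he : p ++ a :: s = p' ++ a :: s') (hp : a ∉ p) (hp' : a ∉ p') : p = p' ∧ s = s' := by
  have hlen := congrArg (List.idxOf a) he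
  simp only [List.idxOf_append_of_notMem hp, List.idxOf_append_of_notMem hp',
    List.idxOf_cons_self] at hlen
  obtain ⟨rfl, h⟩ := List.append_inj he (by simpa using hlen)
  exact ⟨rfl, (List.cons_eq_cons.1 h).2⟩

theorem sublist_finRange_iff {n : ℕ} {l : List (Fin n)} :
    l <+ List.finRange n ↔ l.Pairwise (· < ·) :=
  ⟨fun h => (List.sortedLT_finRange n).pairwise.sublist h, fun h =>
    List.sublist_of_subperm_of_pairwise
      (List.subperm_of_subset h.nodup fun i _ => List.mem_finRange i) h
      (List.sortedLT_finRange n).pairwise⟩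

theorem triple_sublist_ofFn_iff {α : Type*} {n : ℕ} {f : Fin n → α} {a b c : α} :
    [a, b, c] <+ List.ofFn f ↔ ∃ i j k, i < j ∧ j < k ∧ f i = a ∧ f j = b ∧ f k = c := by
  rw [List.ofFn_eq_map, List.sublist_map_iff]
  constructor
  · rintro ⟨_ | ⟨i, _ | ⟨j, _ | ⟨k, _ | _⟩⟩⟩, hs, he⟩ <;>
      simp only [List.map_cons, List.map_nil, List.cons.injEq, reduceCtorEq, and_false] at he
    obtain ⟨rfl, rfl, rfl, -⟩ := he
    simp only [sublist_finRange_iff, List.pairwise_cons, List.mem_cons, List.not_mem_nil] at hs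
    exact ⟨i, j, k, hs.1 j (by simp), hs.2.1 k (by simp), rfl, rfl, rfl⟩
  · rintro ⟨i, j, k, hij, hjk, rfl, rfl, rfl⟩
    refine ⟨[i, j, k], sublist_finRange_iff.2 ?_, rfl⟩
    simp only [List.pairwise_cons, List.mem_cons, List.not_mem_nil]
    grind

variable (r : ℕ → ℕ → Prop)

def HasPairAbove (m : ℕ) (l : List ℕ) : Prop :=
  ∃ x y, m < x ∧ m < y ∧ r x y ∧ [x, y] <+ l

/-- `HasTriple (· < ·)` is containment of the pattern 123, `HasTriple (· > ·)` of 132. -/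
def HasTriple (l : List ℕ) : Prop :=
  ∃ a x y, a < x ∧ a < y ∧ r x y ∧ [a, x, y] <+ l

variable {r}

theorem hasPairAbove_nil (m : ℕ) : ¬ HasPairAbove r m [] := by
  rintro ⟨x, y, -, -, -, h⟩
  simp at h

theorem hasPairAbove_cons {m a : ℕ} {t : List ℕ} :
    HasPairAbove r m (a :: t) ↔ (m < a ∧ ∃ y ∈ t, m < y ∧ r a y) ∨ HasPairAbove r m t := by
  simp only [HasPairAbove, List.sublist_cons_iff]
  constructor
  · rintro ⟨x, y, hx, hy, hxy, hs | ⟨_, ⟨⟩, hs⟩⟩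
    · exact .inr ⟨x, y, hx, hy, hxy, hs⟩
    · exact .inl ⟨hx, y, List.singleton_sublist.1 hs, hy, hxy⟩
  · rintro (⟨ha, y, hyt, hy, hay⟩ | ⟨x, y, hx, hy, hxy, hs⟩)
    · exact ⟨a, y, ha, hy, hay, .inr ⟨[y], rfl, List.singleton_sublist.2 hyt⟩⟩
    · exact ⟨x, y, hx, hy, hxy, .inl hs⟩

theorem HasPairAbove.mono {m m' : ℕ} {l : List ℕ} (h : HasPairAbove r m l) (hm : m' ≤ m) :
    HasPairAbove r m' l := by
  obtain ⟨x, y, hx, hy, hxy, hs⟩ := h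
  exact ⟨x, y, by omega, by omega, hxy, hs⟩

theorem hasPairAbove_append {m : ℕ} {l₁ l₂ : List ℕ} :
    HasPairAbove r m (l₁ ++ l₂) ↔ HasPairAbove r m l₁ ∨ HasPairAbove r m l₂ ∨
      ∃ x ∈ l₁, ∃ y ∈ l₂, m < x ∧ m < y ∧ r x y := by
  induction l₁ with
  | nil => simp [hasPairAbove_nil]
  | cons a t ih =>
    simp only [List.cons_append, hasPairAbove_cons, ih, List.mem_append, List.mem_cons]
    grind

theorem hasTriple_nil : ¬ HasTriple r [] := by
  rintro ⟨a, x, y, -, -, -, h⟩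
  simp at h

theorem hasTriple_cons {a : ℕ} {t : List ℕ} :
    HasTriple r (a :: t) ↔ HasPairAbove r a t ∨ HasTriple r t := by
  simp only [HasTriple, HasPairAbove, List.sublist_cons_iff]
  constructor
  · rintro ⟨b, x, y, hx, hy, hxy, hs | ⟨_, ⟨⟩, hs⟩⟩
    · exact .inr ⟨b, x, y, hx, hy, hxy, hs⟩
    · exact .inl ⟨x, y, hx, hy, hxy, hs⟩
  · rintro (⟨x, y, hx, hy, hxy, hs⟩ | ⟨b, x, y, hx, hy, hxy, hs⟩)
    · exact ⟨a, x, y, hx, hy, hxy, .inr ⟨_, rfl, hs⟩⟩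
    · exact ⟨b, x, y, hx, hy, hxy, .inl hs⟩

theorem head_eq_of_not_hasPairAbove [Std.Trichotomous r] {m a a' : ℕ}
    {t t' : List ℕ} (h : ¬ HasPairAbove r m (a :: t)) (h' : ¬ HasPairAbove r m (a' :: t'))
    (hp : a :: t ~ a' :: t') (ha : m < a) (ha' : m < a') : a = a' := by
  by_contra hne
  have ht : a' ∈ t := (List.mem_cons.1 (hp.mem_iff.2 List.mem_cons_self)).resolve_left (Ne.symm hne)
  have ht' : a ∈ t' := (List.mem_cons.1 (hp.mem_iff.1 List.mem_cons_self)).resolve_left hne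
  rw [hasPairAbove_cons, not_or, not_and] at h h'
  exact hne <| Std.Trichotomous.trichotomous a a' (fun hr => h.1 ha ⟨a', ht, ha', hr⟩)
    (fun hr => h'.1 ha' ⟨a, ht', ha, hr⟩)

variable (r) in
def IsPick (pick : ℕ → Finset ℕ → ℕ) : Prop :=
  ∀ m s, (∃ x ∈ s, m < x) → pick m s ∈ s ∧ m < pick m s ∧ ∀ y ∈ s, m < y → ¬ r (pick m s) y

theorem exists_isPick
    (h : ∀ m (s : Finset ℕ), (∃ x ∈ s, m < x) → ∃ b ∈ s, m < b ∧ ∀ y ∈ s, m < y → ¬ r b y) :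
    ∃ pick, IsPick r pick := by
  choose! pick hpick using h
  exact ⟨pick, hpick⟩

theorem exists_isPick_lt : ∃ pick, IsPick (· < ·) pick := by
  refine exists_isPick fun m s ⟨x, hx, hmx⟩ => ?_
  obtain ⟨b, hb, hmax⟩ := (s.filter (m < ·)).exists_max_image id ⟨x, mem_filter.2 ⟨hx, hmx⟩⟩
  rw [mem_filter] at hb
  exact ⟨b, hb.1, hb.2, fun y hy hmy => not_lt.2 (hmax y (mem_filter.2 ⟨hy, hmy⟩))⟩

theorem exists_isPick_gt : ∃ pick, IsPick (· > ·) pick := by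
  refine exists_isPick fun m s ⟨x, hx, hmx⟩ => ?_
  obtain ⟨b, hb, hmin⟩ := (s.filter (m < ·)).exists_min_image id ⟨x, mem_filter.2 ⟨hx, hmx⟩⟩
  rw [mem_filter] at hb
  exact ⟨b, hb.1, hb.2, fun y hy hmy => not_lt.2 (hmin y (mem_filter.2 ⟨hy, hmy⟩))⟩

/-- The Simion–Schmidt map: `m` is the running minimum and `s` the pool of unused values; new
left-to-right minima are kept, every other entry is replaced by the value `pick` chooses. -/
def fill (pick : ℕ → Finset ℕ → ℕ) : ℕ → Finset ℕ → List ℕ → List ℕ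
  | _, _, [] => []
  | m, s, a :: t =>
    if a < m then a :: fill pick a (s.erase a) t
    else pick m s :: fill pick m (s.erase (pick m s)) t

structure FillInv (m : ℕ) (s : Finset ℕ) (l : List ℕ) : Prop where
  nodup : l.Nodup
  notMem_list : m ∉ l
  notMem_pool : m ∉ s
  length_eq : l.length = s.card
  mem_iff_of_lt : ∀ x < m, x ∈ l ↔ x ∈ s

namespace FillInv

variable {m a : ℕ} {s : Finset ℕ} {l t : List ℕ}

theorem of_perm_range {n : ℕ} (h : l ~ List.range n) : FillInv n (range n) l where
  nodup := h.nodup_iff.2 List.nodup_range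
  notMem_list := by simp [h.mem_iff]
  notMem_pool := by simp
  length_eq := by simp [h.length_eq]
  mem_iff_of_lt x _ := by simp [h.mem_iff]

theorem pool_eq_empty (h : FillInv m s []) : s = ∅ :=
  card_eq_zero.1 h.length_eq.symm

theorem mem_pool_of_lt (h : FillInv m s (a :: t)) (ha : a < m) : a ∈ s :=
  (h.mem_iff_of_lt a ha).1 List.mem_cons_self

theorem cons_of_lt (h : FillInv m s (a :: t)) (ha : a < m) : FillInv a (s.erase a) t where
  nodup := h.nodup.of_cons
  notMem_list := (List.nodup_cons.1 h.nodup).1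
  notMem_pool := s.notMem_erase a
  length_eq := by
    have := h.length_eq
    rw [card_erase_of_mem (h.mem_pool_of_lt ha)]
    simp at this ⊢
    omega
  mem_iff_of_lt x hx := by
    have := h.mem_iff_of_lt x (hx.trans ha)
    simp only [List.mem_cons, mem_erase] at this ⊢
    grind

theorem lt_head (h : FillInv m s (a :: t)) (ha : ¬ a < m) : m < a := by
  have := h.notMem_list
  grind

theorem exists_mem_pool_gt (h : FillInv m s (a :: t)) (ha : ¬ a < m) : ∃ x ∈ s, m < x := by
  by_contra! hs
  have hsub : s ⊆ (a :: t).toFinset.filter (· < m) := fun x hx => by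
    have hxm : x < m := lt_of_le_of_ne (hs x hx) (fun he => h.notMem_pool (he ▸ hx))
    simpa [hxm] using (h.mem_iff_of_lt x hxm).2 hx
  have hss : (a :: t).toFinset.filter (· < m) ⊂ (a :: t).toFinset :=
    filter_ssubset.2 ⟨a, by simp, ha⟩
  have := (card_le_card hsub).trans_lt (card_lt_card hss)
  rw [List.toFinset_card_of_nodup h.nodup, h.length_eq] at this
  exact lt_irrefl _ this

theorem cons_of_not_lt {b : ℕ} (h : FillInv m s (a :: t)) (ha : ¬ a < m) (hb : b ∈ s)
    (hmb : m < b) : FillInv m (s.erase b) t where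
  nodup := h.nodup.of_cons
  notMem_list := fun hm => h.notMem_list (List.mem_cons_of_mem a hm)
  notMem_pool := fun hm => h.notMem_pool (mem_of_mem_erase hm)
  length_eq := by
    have := h.length_eq
    rw [card_erase_of_mem hb]
    simp at this ⊢
    omega
  mem_iff_of_lt x hx := by
    have := h.mem_iff_of_lt x hx
    simp only [List.mem_cons, mem_erase] at this ⊢
    grind

end FillInv

section Fill

variable {pick : ℕ → Finset ℕ → ℕ}

theorem fill_cons_of_lt {m a : ℕ} {s : Finset ℕ} {t : List ℕ} (ha : a < m) :
    fill pick m s (a :: t) = a :: fill pick a (s.erase a) t := if_pos ha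

theorem fill_cons_of_not_lt {m a : ℕ} {s : Finset ℕ} {t : List ℕ} (ha : ¬ a < m) :
    fill pick m s (a :: t) = pick m s :: fill pick m (s.erase (pick m s)) t := if_neg ha

variable (hpick : IsPick r pick)
include hpick

theorem coe_fill {l : List ℕ} :
    ∀ {m s}, FillInv m s l → (fill pick m s l : Multiset ℕ) = s.val := by
  induction l with
  | nil => intro m s h; simp [fill, h.pool_eq_empty]
  | cons a t ih =>
    intro m s h
    by_cases ha : a < m
    · rw [fill_cons_of_lt ha, ← Multiset.cons_coe, ih (h.cons_of_lt ha), erase_val,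
        Multiset.cons_erase (h.mem_pool_of_lt ha)]
    · obtain ⟨hb, hmb, -⟩ := hpick m s (h.exists_mem_pool_gt ha)
      rw [fill_cons_of_not_lt ha, ← Multiset.cons_coe, ih (h.cons_of_not_lt ha hb hmb), erase_val,
        Multiset.cons_erase hb]

theorem not_hasTriple_and_not_hasPairAbove_fill {l : List ℕ} : ∀ {m s}, FillInv m s l →
    ¬ HasTriple r (fill pick m s l) ∧ ¬ HasPairAbove r m (fill pick m s l) := by
  induction l with
  | nil => intro m s _; exact ⟨hasTriple_nil, hasPairAbove_nil m⟩
  | cons a t ih =>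
    intro m s h
    by_cases ha : a < m
    · obtain ⟨hT, hP⟩ := ih (h.cons_of_lt ha)
      rw [fill_cons_of_lt ha, hasTriple_cons, hasPairAbove_cons]
      exact ⟨by tauto, by rintro (⟨hma, -⟩ | hP') <;> [omega; exact hP (hP'.mono ha.le)]⟩
    · obtain ⟨hb, hmb, hbmax⟩ := hpick m s (h.exists_mem_pool_gt ha)
      have hinv := h.cons_of_not_lt ha hb hmb
      obtain ⟨hT, hP⟩ := ih hinv
      have hsub : ∀ y ∈ fill pick m (s.erase (pick m s)) t, y ∈ s := fun y hy => by
        rw [← Multiset.mem_coe, coe_fill hpick hinv] at hy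
        exact mem_of_mem_erase hy
      rw [fill_cons_of_not_lt ha, hasTriple_cons, hasPairAbove_cons]
      refine ⟨by rintro (hP' | hT') <;> [exact hP (hP'.mono hmb.le); exact hT hT'], ?_⟩
      rintro (⟨-, y, hy, hmy, hby⟩ | hP')
      · exact hbmax y (hsub y hy) hmy hby
      · exact hP hP'

theorem eq_of_fill_eq {r' : ℕ → ℕ → Prop} [Std.Trichotomous r'] {l₁ : List ℕ} :
    ∀ {m s l₂}, FillInv m s l₁ → FillInv m s l₂ → ¬ HasTriple r' l₁ → ¬ HasPairAbove r' m l₁ →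
      ¬ HasTriple r' l₂ → ¬ HasPairAbove r' m l₂ → l₁ ~ l₂ →
      fill pick m s l₁ = fill pick m s l₂ → l₁ = l₂ := by
  induction l₁ with
  | nil => intro m s l₂ _ _ _ _ _ _ hp _; exact hp.nil_eq
  | cons a t ih =>
    intro m s l₂ h₁ h₂ hT₁ hP₁ hT₂ hP₂ hp he
    obtain _ | ⟨a', t'⟩ := l₂
    · exact absurd hp.length_eq (by simp)
    rw [hasTriple_cons, not_or] at hT₁ hT₂
    by_cases ha : a < m <;> by_cases ha' : a' < m
    · rw [fill_cons_of_lt ha, fill_cons_of_lt ha'] at he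
      obtain ⟨rfl, he⟩ := List.cons_eq_cons.1 he
      rw [ih (h₁.cons_of_lt ha) (h₂.cons_of_lt ha) hT₁.2 hT₁.1 hT₂.2 hT₂.1 hp.cons_inv he]
    · rw [fill_cons_of_lt ha, fill_cons_of_not_lt ha'] at he
      have := (hpick m s (h₂.exists_mem_pool_gt ha')).2.1
      grind
    · rw [fill_cons_of_not_lt ha, fill_cons_of_lt ha'] at he
      have := (hpick m s (h₁.exists_mem_pool_gt ha)).2.1
      grind
    · obtain rfl := head_eq_of_not_hasPairAbove hP₁ hP₂ hp (h₁.lt_head ha) (h₂.lt_head ha')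
      rw [fill_cons_of_not_lt ha, fill_cons_of_not_lt ha] at he
      obtain ⟨hb, hmb, -⟩ := hpick m s (h₁.exists_mem_pool_gt ha)
      rw [hasPairAbove_cons, not_or] at hP₁ hP₂
      rw [ih (h₁.cons_of_not_lt ha hb hmb) (h₂.cons_of_not_lt ha hb hmb) hT₁.2 hP₁.2 hT₂.2 hP₂.2
        hp.cons_inv (List.cons_eq_cons.1 he).2]

end Fill

variable (r) in
noncomputable def avoiders (n : ℕ) : Finset (List ℕ) :=
  (List.range n).permutations.toFinset.filter (fun l => ¬ HasTriple r l)

theorem mem_avoiders {n : ℕ} {l : List ℕ} :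
    l ∈ avoiders r n ↔ l ~ List.range n ∧ ¬ HasTriple r l := by
  simp [avoiders]

theorem not_hasPairAbove_of_perm_range {n : ℕ} {l : List ℕ} (h : l ~ List.range n) :
    ¬ HasPairAbove r n l := by
  rintro ⟨x, _, hx, -, -, hs⟩
  have := List.mem_range.1 (h.subset (hs.subset List.mem_cons_self))
  omega

theorem card_avoiders_le_of_isPick {pick : ℕ → Finset ℕ → ℕ} (hpick : IsPick r pick)
    (r' : ℕ → ℕ → Prop) [Std.Trichotomous r'] (n : ℕ) :
    #(avoiders r' n) ≤ #(avoiders r n) := by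
  refine card_le_card_of_injOn (fill pick n (range n)) (fun l hl => ?_) (fun l₁ hl₁ l₂ hl₂ he => ?_)
  · obtain ⟨hp, -⟩ := mem_avoiders.1 hl
    have hinv := FillInv.of_perm_range hp
    refine mem_avoiders.2
      ⟨Multiset.coe_eq_coe.1 ?_, (not_hasTriple_and_not_hasPairAbove_fill hpick hinv).1⟩
    rw [coe_fill hpick hinv, range_val, Multiset.range]
  · obtain ⟨hp₁, hT₁⟩ := mem_avoiders.1 hl₁
    obtain ⟨hp₂, hT₂⟩ := mem_avoiders.1 hl₂
    exact eq_of_fill_eq hpick (.of_perm_range hp₁) (.of_perm_range hp₂) hT₁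
      (not_hasPairAbove_of_perm_range hp₁) hT₂ (not_hasPairAbove_of_perm_range hp₂)
      (hp₁.trans hp₂.symm) he

theorem card_avoiders_lt_eq_card_avoiders_gt (n : ℕ) :
    #(avoiders (· < ·) n) = #(avoiders (· > ·) n) := by
  obtain ⟨pickMax, hmax⟩ := exists_isPick_lt
  obtain ⟨pickMin, hmin⟩ := exists_isPick_gt
  exact le_antisymm (card_avoiders_le_of_isPick hmin _ n) (card_avoiders_le_of_isPick hmax _ n)

theorem HasTriple.of_sublist {l l' : List ℕ} (h : HasTriple r l) (hl : l <+ l') : HasTriple r l' :=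
  let ⟨a, x, y, hx, hy, hxy, hs⟩ := h
  ⟨a, x, y, hx, hy, hxy, hs.trans hl⟩

theorem hasTriple_map_add_iff {k : ℕ} (hr : ∀ x y, r (k + x) (k + y) ↔ r x y) {l : List ℕ} :
    HasTriple r (l.map (k + ·)) ↔ HasTriple r l := by
  constructor
  · rintro ⟨a, x, y, hx, hy, hxy, hs⟩
    obtain ⟨_ | ⟨a', _ | ⟨x', _ | ⟨y', _ | _⟩⟩⟩, hs', he⟩ := List.sublist_map_iff.1 hs <;>
      simp only [List.map_cons, List.map_nil, List.cons.injEq, reduceCtorEq, and_false] at he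
    obtain ⟨rfl, rfl, rfl, -⟩ := he
    exact ⟨a', x', y', by omega, by omega, (hr x' y').1 hxy, hs'⟩
  · rintro ⟨a, x, y, hx, hy, hxy, hs⟩
    exact ⟨k + a, k + x, k + y, by omega, by omega, (hr x y).2 hxy, hs.map (k + ·)⟩

theorem hasTriple_gt_append_cons {u v : List ℕ} {M : ℕ} (hu : ∀ x ∈ u, x < M)
    (hv : ∀ y ∈ v, y < M) (huv : ∀ x ∈ u, ∀ y ∈ v, y < x) :
    HasTriple (· > ·) (u ++ M :: v) ↔ HasTriple (· > ·) u ∨ HasTriple (· > ·) v := by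
  induction u with
  | nil =>
    simp only [List.nil_append, hasTriple_cons, hasTriple_nil, false_or, or_iff_right_iff_imp]
    rintro ⟨x, _, hx, -, -, hs⟩
    exact absurd (hv x (hs.subset List.mem_cons_self)) (by omega)
  | cons a u ih =>
    simp only [List.mem_cons, forall_eq_or_imp] at hu huv
    rw [List.cons_append, hasTriple_cons, hasTriple_cons, ih hu.2 huv.2, hasPairAbove_append,
      hasPairAbove_cons]
    have hv_pair : ¬ HasPairAbove (· > ·) a v := by
      rintro ⟨x, _, hx, -, -, hs⟩
      exact absurd (huv.1 x (hs.subset List.mem_cons_self)) (by omega)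
    have hcross : ¬ ∃ x ∈ u, ∃ y ∈ M :: v, a < x ∧ a < y ∧ x > y := by
      rintro ⟨x, hx, y, hy, -, hay, hxy⟩
      rcases List.mem_cons.1 hy with rfl | hy
      · exact absurd (hu.2 x hx) (by omega)
      · exact absurd (huv.1 y hy) (by omega)
    have hv_M : ¬ ∃ y ∈ v, a < y ∧ M > y := fun ⟨y, hy, hay, _⟩ => absurd (huv.1 y hy) (by omega)
    simp only [hv_pair, hcross, hv_M, and_false, or_false, or_assoc]

theorem hasTriple_gt_of_lt {u v : List ℕ} {M x y : ℕ} (hx : x ∈ u) (hy : y ∈ v) (hxy : x < y)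
    (hyM : y < M) : HasTriple (· > ·) (u ++ M :: v) :=
  ⟨x, M, y, hxy.trans hyM, hxy, hyM,
    (List.singleton_sublist.2 hx).append (List.cons_sublist_cons.2 (List.singleton_sublist.2 hy))⟩

theorem perm_range_of_append {p s : List ℕ} (h : p ++ s ~ List.range (s.length + p.length))
    (hlt : ∀ x ∈ p, ∀ y ∈ s, y < x) :
    s ~ List.range s.length ∧ p ~ (List.range p.length).map (s.length + ·) := by
  have hnd := h.nodup_iff.2 List.nodup_range
  have hs : s ~ List.range s.length := by
    refine perm_range_of_nodup (List.nodup_append.1 hnd).2.1 rfl fun y hy => ?_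
    have hyN := List.mem_range.1 (h.subset (List.mem_append_right p hy))
    have hsub : p.toFinset ⊆ Ioo y (s.length + p.length) := fun x hx => by
      rw [List.mem_toFinset] at hx
      exact mem_Ioo.2 ⟨hlt x hx y hy, List.mem_range.1 (h.subset (List.mem_append_left s hx))⟩
    have := card_le_card hsub
    rw [List.toFinset_card_of_nodup (List.nodup_append.1 hnd).1, Nat.card_Ioo] at this
    omega
  refine ⟨hs, (List.perm_append_right_iff s).1 (h.trans ?_)⟩
  rw [List.range_add]
  exact List.perm_append_comm.trans (List.Perm.append_left _ hs.symm)

theorem hasTriple_gt_map_add_iff (k : ℕ) {l : List ℕ} :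
    HasTriple (· > ·) (l.map (k + ·)) ↔ HasTriple (· > ·) l :=
  hasTriple_map_add_iff (r := (· > ·)) fun _ _ => Nat.add_lt_add_iff_left

theorem append_cons_mem_avoiders_gt {n j : ℕ} {u v : List ℕ} (hj : j ≤ n)
    (hu : u ∈ avoiders (· > ·) j) (hv : v ∈ avoiders (· > ·) (n - j)) :
    u.map (n - j + ·) ++ n :: v ∈ avoiders (· > ·) (n + 1) := by
  obtain ⟨hup, huT⟩ := mem_avoiders.1 hu
  obtain ⟨hvp, hvT⟩ := mem_avoiders.1 hv
  have hu_lt : ∀ x ∈ u, x < j := fun x hx => List.mem_range.1 (hup.subset hx)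
  have hv_lt : ∀ y ∈ v, y < n - j := fun y hy => List.mem_range.1 (hvp.subset hy)
  refine mem_avoiders.2 ⟨?_, ?_⟩
  · refine List.perm_middle.trans ((List.Perm.cons n ?_).trans (range_succ_perm n).symm)
    rw [show List.range n = List.range (n - j + j) by congr 1; omega, List.range_add]
    exact ((hup.map _).append hvp).trans List.perm_append_comm
  · rw [hasTriple_gt_append_cons, hasTriple_gt_map_add_iff]
    · tauto
    · exact List.forall_mem_map.2 fun x hx => by have := hu_lt x hx; omega
    · exact fun y hy => by have := hv_lt y hy; omega
    · exact List.forall_mem_map.2 fun x _ y hy => by have := hv_lt y hy; omega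

theorem exists_append_cons_eq_of_mem_avoiders_gt {n : ℕ} {l : List ℕ}
    (hl : l ∈ avoiders (· > ·) (n + 1)) :
    ∃ j ≤ n, ∃ u ∈ avoiders (· > ·) j, ∃ v ∈ avoiders (· > ·) (n - j),
      u.map (n - j + ·) ++ n :: v = l := by
  obtain ⟨hl, hT⟩ := mem_avoiders.1 hl
  obtain ⟨p, s, rfl⟩ := List.append_of_mem (hl.mem_iff.2 (List.mem_range.2 n.lt_succ_self))
  have hps : p ++ s ~ List.range n :=
    (List.perm_middle.symm.trans (hl.trans (range_succ_perm n))).cons_inv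
  have hnd := hps.nodup_iff.2 List.nodup_range
  have hlen : p.length + s.length = n := by simpa using hps.length_eq
  have hcross : ∀ x ∈ p, ∀ y ∈ s, y < x := by
    intro x hx y hy
    have hne := (List.nodup_append.1 hnd).2.2 x hx y hy
    have hyn := List.mem_range.1 (hps.subset (List.mem_append_right p hy))
    by_contra hxy
    exact hT (hasTriple_gt_of_lt hx hy (by omega) hyn)
  obtain ⟨hs, hp⟩ := perm_range_of_append (by rwa [add_comm s.length, hlen]) hcross
  have hp_ge : ∀ x ∈ p, s.length ≤ x := fun x hx => by
    obtain ⟨y, -, rfl⟩ := List.mem_map.1 (hp.subset hx)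
    omega
  have hmap : (p.map (· - s.length)).map (s.length + ·) = p := by
    rw [List.map_map]
    exact List.map_congr_left (fun x hx => by have := hp_ge x hx; simp; omega) |>.trans p.map_id
  refine ⟨p.length, by omega, p.map (· - s.length), mem_avoiders.2 ⟨?_, ?_⟩, s,
    mem_avoiders.2 ⟨?_, ?_⟩, ?_⟩
  · simpa [List.map_map, Function.comp_def] using hp.map (· - s.length)
  · rw [← hasTriple_gt_map_add_iff s.length, hmap]
    exact fun h => hT (h.of_sublist (List.sublist_append_left _ _))
  · rwa [show n - p.length = s.length by omega]
  · exact fun h => hT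
      (h.of_sublist ((List.sublist_cons_self _ _).trans (List.sublist_append_right _ _)))
  · rw [show n - p.length = s.length by omega, hmap]

theorem notMem_map_add_of_perm_range {n j : ℕ} {u : List ℕ} (hj : j ≤ n) (hu : u ~ List.range j) :
    n ∉ u.map (n - j + ·) := by
  simp only [List.mem_map, not_exists, not_and]
  intro x hx
  have := List.mem_range.1 (hu.subset hx)
  omega

theorem card_avoiders_gt_succ (n : ℕ) :
    #(avoiders (· > ·) (n + 1)) =
      ∑ j ∈ range (n + 1), #(avoiders (· > ·) j) * #(avoiders (· > ·) (n - j)) := by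
  simp_rw [← card_product, ← card_sigma]
  refine (card_bij (fun p _ => p.2.1.map (n - p.1 + ·) ++ n :: p.2.2) ?_ ?_ ?_).symm
  · rintro ⟨j, u, v⟩ hp
    simp only [mem_sigma, mem_range, mem_product] at hp
    exact append_cons_mem_avoiders_gt (j := j) (by omega) hp.2.1 hp.2.2
  · rintro ⟨j, u, v⟩ hp ⟨j', u', v'⟩ hp' he
    simp only [mem_sigma, mem_range, mem_product, mem_avoiders] at hp hp'
    dsimp only at he
    obtain ⟨hmap, rfl⟩ := append_cons_inj_of_notMem he
      (notMem_map_add_of_perm_range (by omega) hp.2.1.1)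
      (notMem_map_add_of_perm_range (by omega) hp'.2.1.1)
    obtain rfl : j = j' := by
      simpa [hp.2.1.1.length_eq, hp'.2.1.1.length_eq] using congrArg List.length hmap
    obtain rfl := List.map_injective_iff.2 (add_right_injective _) hmap
    rfl
  · intro l hl
    obtain ⟨j, hj, u, hu, v, hv, rfl⟩ := exists_append_cons_eq_of_mem_avoiders_gt hl
    refine ⟨⟨j, u, v⟩, ?_, rfl⟩
    simp only [mem_sigma, mem_range, mem_product]
    exact ⟨by omega, hu, hv⟩

theorem card_avoiders_gt (n : ℕ) : #(avoiders (· > ·) n) = catalan n := by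
  induction n using Nat.strong_induction_on with
  | _ n ih =>
    cases n with
    | zero => simp [avoiders, filter_singleton, hasTriple_nil]
    | succ n =>
      rw [card_avoiders_gt_succ, catalan_succ, ← Fin.sum_univ_eq_sum_range]
      exact sum_congr rfl fun i _ => by rw [ih i (by omega), ih (n - i) (by omega)]

theorem hasTriple_lt_ofFn_iff {n : ℕ} {f : Fin n → ℕ} :
    HasTriple (· < ·) (List.ofFn f) ↔ ∃ a b c, a < b ∧ b < c ∧ f a < f b ∧ f b < f c := by
  simp only [HasTriple, triple_sublist_ofFn_iff]
  constructor
  · rintro ⟨-, -, -, h₁, -, h₂, i, j, k, hij, hjk, rfl, rfl, rfl⟩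
    exact ⟨i, j, k, hij, hjk, h₁, h₂⟩
  · rintro ⟨i, j, k, hij, hjk, h₁, h₂⟩
    exact ⟨_, _, _, h₁, h₁.trans h₂, h₂, i, j, k, hij, hjk, rfl, rfl, rfl⟩

theorem card_perm_not_hasTriple_lt (n : ℕ) :
    #{π : Equiv.Perm (Fin n) | ¬ ∃ a b c : Fin n, a < b ∧ b < c ∧ π a < π b ∧ π b < π c} =
      #(avoiders (· < ·) n) := by
  refine card_bij (fun π _ => List.ofFn fun i => (π i : ℕ)) (fun π hπ => ?_)
    (fun π₁ _ π₂ _ he => ?_) (fun l hl => ?_)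
  · refine mem_avoiders.2 ⟨perm_range_of_nodup ?_ (List.length_ofFn) ?_, ?_⟩
    · exact List.nodup_ofFn.2 (Fin.val_injective.comp π.injective)
    · simp
    · rw [hasTriple_lt_ofFn_iff]
      exact (mem_filter.1 hπ).2
  · exact Equiv.ext fun i => Fin.val_injective (congrFun (List.ofFn_injective he) i)
  · obtain ⟨hl, hT⟩ := mem_avoiders.1 hl
    have hlen : l.length = n := by simp [hl.length_eq]
    let g : Fin l.length → Fin n := fun i => ⟨l.get i, List.mem_range.1 (hl.subset (l.get_mem i))⟩
    have hg : Function.Bijective g := (Fintype.bijective_iff_injective_and_card g).2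
      ⟨fun i j hij => List.nodup_iff_injective_get.1 (hl.nodup_iff.2 List.nodup_range)
        (congrArg Fin.val hij), by simp [hlen]⟩
    let π : Equiv.Perm (Fin n) := (finCongr hlen).symm.trans (Equiv.ofBijective g hg)
    have hπ : (List.ofFn fun i => (π i : ℕ)) = l := by
      conv_rhs => rw [← List.ofFn_get l, List.ofFn_congr hlen]
      rfl
    refine ⟨π, mem_filter.2 ⟨mem_univ _, ?_⟩, hπ⟩
    exact fun h => hT (hπ ▸ hasTriple_lt_ofFn_iff.2 h)

end PatternAvoidance

/-- The number of 123-avoiding permutations of `{1,…,n}` is the Catalan number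
`C(2n,n)/(n+1)`, hence the probability that a uniformly random permutation of
`{1,…,n}` has no increasing subsequence of length 3 is `C(2n,n)/(n+1)!`. -/
theorem stmt_17 (n : ℕ) :
    ((Finset.univ.filter (fun π : Equiv.Perm (Fin n) =>
        ¬ ∃ a b c : Fin n, a < b ∧ b < c ∧ π a < π b ∧ π b < π c)).card : ℚ)
      = (Nat.choose (2 * n) n : ℚ) / ((n : ℚ) + 1) ∧
    ((Finset.univ.filter (fun π : Equiv.Perm (Fin n) =>
        ¬ ∃ a b c : Fin n, a < b ∧ b < c ∧ π a < π b ∧ π b < π c)).card : ℚ)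
        / (Nat.factorial n : ℚ)
      = (Nat.choose (2 * n) n : ℚ) / (Nat.factorial (n + 1) : ℚ) := by
  open PatternAvoidance in
  rw [card_perm_not_hasTriple_lt, card_avoiders_lt_eq_card_avoiders_gt, card_avoiders_gt]
  have hcat : (catalan n : ℚ) = (Nat.choose (2 * n) n : ℚ) / ((n : ℚ) + 1) := by
    rw [eq_div_iff (by positivity), ← Nat.centralBinom_eq_two_mul_choose,
      ← succ_mul_catalan_eq_centralBinom]
    push_cast
    ring
  refine ⟨hcat, ?_⟩
  rw [hcat, div_div, Nat.factorial_succ]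
  push_cast
  ring
end

section
/- For a bijection f: Z⁺ → Z⁺ chosen so that the relative order of any finite prefix is uniform (equivalently, interpreting the probabilities from Proposition 3), the median of the first increasing triple X in lexicographic order is {1,3,4}: P(X ≤ {1,3,4}) ≥ 1/2 and P(X ≥ {1,3,4}) ≥ 1/2. Equivalently, ∑_{r=3}^∞ 1/((r-1)r) = 1/2 and ∑ over {1,s,r} ≤ {1,3,4} of 1/((s-1)(r-1)r) ≥ 1/2. -/
open Filter Topology

theorem hasSum_sub_succ_of_antitone {f : ℕ → ℝ} (hf : Antitone f) {l : ℝ}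
    (hl : Tendsto f atTop (𝓝 l)) : HasSum (fun n ↦ f n - f (n + 1)) (f 0 - l) := by
  refine (hasSum_iff_tendsto_nat_of_nonneg (fun n ↦ sub_nonneg.2 (hf n.le_succ)) _).2 ?_
  simp_rw [Finset.sum_range_sub']
  exact tendsto_const_nhds.sub hl

theorem hasSum_one_div_add_mul_add_one {a : ℝ} (ha : 0 < a) :
    HasSum (fun n : ℕ ↦ 1 / ((n + a) * (n + a + 1))) (1 / a) := by
  have hf : Antitone fun n : ℕ ↦ 1 / ((n : ℝ) + a) := fun m n hmn ↦
    one_div_le_one_div_of_le (by positivity) (by gcongr)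
  have hl : Tendsto (fun n : ℕ ↦ 1 / ((n : ℝ) + a)) atTop (𝓝 0) := by
    simpa only [one_div, Function.comp_def] using
      tendsto_inv_atTop_zero.comp (tendsto_atTop_add_const_right _ a tendsto_natCast_atTop_atTop)
  convert hasSum_sub_succ_of_antitone hf hl using 1
  · ext n
    have : (n : ℝ) + a ≠ 0 := by positivity
    push_cast
    field_simp
    ring
  · simp

/-- The median of the first increasing triple `X` (with distribution
`P(X = {1,s,r}) = 1/((s-1)(r-1)r)`) is `{1,3,4}`:
`∑_{r=3}^∞ 1/((r-1)r) = 1/2` (reindexed by `r = r'+3`), the total mass of the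
triples `≤ {1,3,4}` (all `{1,2,r}`, `r ≥ 3`, together with `{1,3,4}`) is `≥ 1/2`,
and the mass of the triples `≥ {1,3,4}` (everything except the `{1,2,r}`) is `≥ 1/2`. -/
theorem stmt_18 :
    (∑' r : ℕ, (1 : ℝ) / (((r : ℝ) + 2) * ((r : ℝ) + 3)) = 1 / 2) ∧
    ((∑' r : ℕ, (1 : ℝ) / (((r : ℝ) + 2) * ((r : ℝ) + 3)))
        + 1 / ((3 - 1 : ℝ) * (4 - 1) * 4) ≥ 1 / 2) ∧
    (1 - ∑' r : ℕ, (1 : ℝ) / (((r : ℝ) + 2) * ((r : ℝ) + 3)) ≥ 1 / 2) := by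
  have htsum : ∑' r : ℕ, (1 : ℝ) / (((r : ℝ) + 2) * ((r : ℝ) + 3)) = 1 / 2 := by
    convert (hasSum_one_div_add_mul_add_one two_pos).tsum_eq using 4
    ring
  rw [htsum]
  norm_num
end
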